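/- arXiv:2604.00504 — 7 statements merged into one kernel-verified Lean document; each statement's English description precedes it below -/
import Mathlib

section
/- Under Assumption 1 (unconfoundedness) and Assumption 2 (MAR), for each d ∈ {0,1}, assuming P(D = 1−d, R = 1) > 0 and P(D = d, R = 1 | X) > 0 almost surely, for every η ∈ ℝ: P(V_d < η | D = 1−d, R = 1) = E[ P(V_d < η | X, D = d, R = 1) | D = 1−d, R = 1 ]. In particular, if η_{α,d} is chosen so that the right-hand side equals 1 − α, then P(V_d < η_{α,d} | D = 1−d, R = 1) = 1 − α. -/
/-!
Unconfoundedness and MAR combine, by the contraction property of conditional independence, into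
`(Y(1), Y(0)) ⟂ (D, R) | X`, hence `σ(X, Y) ⟂ σ(D, R) | X`. Consequently, for every event `S` in
`σ(X, Y)` and every event `B` in `σ(X) ⊔ σ(D, R)`, `∫_B P(S | X) dP = P(S ∩ B)`. Taking
`B = {D = 1 - d, R = 1}` identifies `P(S | D = 1 - d, R = 1)` with the mean of `P(S | X)` under
`P[· | D = 1 - d, R = 1]`. Taking `B = T ∩ {D = d, R = 1}` with `T ∈ σ(X)` shows that `P(S | X)`
is also the conditional probability of `S` given `X` under `P[· | D = d, R = 1]`, almost surely for
that measure, and then, because `P(D = d, R = 1 | X) > 0`, almost surely for `P`.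
-/

open MeasureTheory ProbabilityTheory MeasurableSpace Set

section PiSystem

variable {Ω : Type*}

lemma isPiSystem_image2_inter {C D : Set (Set Ω)} (hC : IsPiSystem C) (hD : IsPiSystem D) :
    IsPiSystem (image2 (· ∩ ·) C D) := by
  rintro _ ⟨s₁, hs₁, t₁, ht₁, rfl⟩ _ ⟨s₂, hs₂, t₂, ht₂, rfl⟩ hne
  exact ⟨s₁ ∩ s₂, hC _ hs₁ _ hs₂ (hne.mono fun _ h => ⟨h.1.1, h.2.1⟩),
    t₁ ∩ t₂, hD _ ht₁ _ ht₂ (hne.mono fun _ h => ⟨h.1.2, h.2.2⟩), inter_inter_inter_comm ..⟩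

lemma sup_eq_generateFrom_image2_inter (m₁ m₂ : MeasurableSpace Ω) :
    m₁ ⊔ m₂ =
      generateFrom (image2 (· ∩ ·) {s | MeasurableSet[m₁] s} {t | MeasurableSet[m₂] t}) := by
  refine le_antisymm (sup_le ?_ ?_) (generateFrom_le ?_)
  · exact fun s hs => measurableSet_generateFrom ⟨s, hs, univ, .univ, inter_univ s⟩
  · exact fun t ht => measurableSet_generateFrom ⟨univ, .univ, t, ht, univ_inter t⟩
  · rintro _ ⟨s, hs, t, ht, rfl⟩
    exact (le_sup_left (a := m₁) s hs).inter (le_sup_right (b := m₂) t ht)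

end PiSystem

section CondExp

variable {Ω : Type*} {m mΩ : MeasurableSpace Ω} {μ : Measure Ω} {s t A N : Set Ω}

lemma ae_norm_condExp_indicator_le_one : ∀ᵐ ω ∂μ, ‖(μ⟦s | m⟧) ω‖ ≤ 1 :=
  ae_bdd_norm_condExp_of_ae_bdd_norm <| ae_of_all _ fun ω => by
    by_cases h : ω ∈ s <;> simp [h]

lemma setIntegral_cond {T : Set Ω} (hT : MeasurableSet T) (g : Ω → ℝ) :
    ∫ ω in T, g ω ∂μ[|A] = (μ A)⁻¹.toReal * ∫ ω in T ∩ A, g ω ∂μ := by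
  rw [ProbabilityTheory.cond, Measure.restrict_smul, integral_smul_measure,
    Measure.restrict_restrict hT, smul_eq_mul]

variable [IsFiniteMeasure μ]

lemma condExp_indicator_inter_of_measurableSet_left (ht : MeasurableSet[m] t)
    (hs : MeasurableSet s) :
    μ⟦t ∩ s | m⟧ =ᵐ[μ] t.indicator (fun _ => (1 : ℝ)) * μ⟦s | m⟧ := by
  rw [← indicator_indicator]
  filter_upwards [condExp_indicator ((integrable_const (1 : ℝ)).indicator hs) ht] with ω hω
  rw [hω]
  by_cases h : ω ∈ t <;> simp [h]

lemma measure_eq_zero_of_measure_inter_eq_zero_of_condExp_pos (hm : m ≤ mΩ)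
    (hA : MeasurableSet A) (hN : MeasurableSet[m] N) (hAN : μ (A ∩ N) = 0)
    (hpos : ∀ᵐ ω ∂μ, 0 < (μ⟦A | m⟧) ω) : μ N = 0 := by
  have h_int : ∫ ω in N, (μ⟦A | m⟧) ω ∂μ = 0 := by
    rw [setIntegral_condExp hm ((integrable_const _).indicator hA) hN,
      integral_indicator_const _ hA, measureReal_restrict_apply hA, measureReal_def, hAN]
    simp
  have h_zero := (setIntegral_eq_zero_iff_of_nonneg_ae
    (ae_restrict_of_ae (hpos.mono fun _ h => h.le)) integrable_condExp.integrableOn).1 h_int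
  have h_false : ∀ᵐ ω ∂μ.restrict N, False := by
    filter_upwards [h_zero, ae_restrict_of_ae hpos] with ω h0 hp
    exact (h0 ▸ hp).false
  rw [← Measure.restrict_eq_zero, ← ae_eq_bot, ← Filter.eventually_false_iff_eq_bot]
  exact h_false

end CondExp

section CondIndep

variable {Ω : Type*} {m m₁ m₂ m₃ : MeasurableSpace Ω} {mΩ : MeasurableSpace Ω}
  {μ : Measure Ω} [StandardBorelSpace Ω] [IsFiniteMeasure μ] {hm : m ≤ mΩ} {s t A A' : Set Ω}

theorem CondIndep.sup_self_left (hm₁ : m₁ ≤ mΩ) (hm₂ : m₂ ≤ mΩ)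
    (h : CondIndep m m₁ m₂ hm μ) : CondIndep m (m ⊔ m₁) m₂ hm μ := by
  rw [condIndep_iff _ _ _ _ hm₁ hm₂] at h
  refine CondIndepSets.condIndep (sup_le hm hm₁) hm₂
    (isPiSystem_image2_inter (@isPiSystem_measurableSet _ m) (@isPiSystem_measurableSet _ m₁))
    (@isPiSystem_measurableSet _ m₂) (sup_eq_generateFrom_image2_inter m m₁)
    (@generateFrom_measurableSet Ω m₂).symm ?_
  refine (condIndepSets_iff _ _ _ _ ?_ (fun r hr => hm₂ r hr) μ).2 ?_
  · rintro _ ⟨t, ht, s, hs, rfl⟩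
    exact (hm t ht).inter (hm₁ s hs)
  rintro _ r ⟨t, ht, s, hs, rfl⟩ hr
  filter_upwards [condExp_indicator_inter_of_measurableSet_left (μ := μ) ht
      ((hm₁ s hs).inter (hm₂ r hr)),
    condExp_indicator_inter_of_measurableSet_left (μ := μ) ht (hm₁ s hs), h s r hs hr]
    with ω h_tsr h_ts h_sr
  simp only [inter_assoc, h_tsr, h_ts, h_sr, Pi.mul_apply, mul_assoc]

theorem CondIndep.sup_self_right (hm₁ : m₁ ≤ mΩ) (hm₂ : m₂ ≤ mΩ)
    (h : CondIndep m m₁ m₂ hm μ) : CondIndep m m₁ (m ⊔ m₂) hm μ :=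
  (CondIndep.sup_self_left hm₂ hm₁ (CondIndep.symm h)).symm

theorem CondIndep.setIntegral_condExp_indicator (hm₁ : m₁ ≤ mΩ) (hm₂ : m₂ ≤ mΩ)
    (h : CondIndep m m₁ m₂ hm μ) (hs : MeasurableSet[m₁] s) (ht : MeasurableSet[m₂] t) :
    ∫ ω in t, (μ⟦s | m⟧) ω ∂μ = ∫ ω in t, s.indicator (fun _ => (1 : ℝ)) ω ∂μ := by
  have htm : MeasurableSet t := hm₂ t ht
  calc ∫ ω in t, (μ⟦s | m⟧) ω ∂μ
      = ∫ ω, (μ⟦s | m⟧ * t.indicator fun _ => (1 : ℝ)) ω ∂μ := by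
        rw [← integral_indicator htm]
        congr 1 with ω
        by_cases hω : ω ∈ t <;> simp [hω]
    _ = ∫ ω, (μ[μ⟦s | m⟧ * t.indicator fun _ => (1 : ℝ) | m]) ω ∂μ := (integral_condExp hm).symm
    _ = ∫ ω, (μ⟦s | m⟧ * μ⟦t | m⟧) ω ∂μ :=
        integral_congr_ae <| condExp_stronglyMeasurable_mul_of_bound hm stronglyMeasurable_condExp
          ((integrable_const _).indicator htm) 1 ae_norm_condExp_indicator_le_one
    _ = ∫ ω, (μ⟦s ∩ t | m⟧) ω ∂μ :=
        integral_congr_ae ((condIndep_iff _ _ _ _ hm₁ hm₂ μ).1 h s t hs ht).symm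
    _ = ∫ ω in t, s.indicator (fun _ => (1 : ℝ)) ω ∂μ := by
        rw [integral_condExp hm, ← integral_indicator htm, indicator_indicator, inter_comm]

theorem CondIndep.condExp_indicator_ae_eq (hm₁ : m₁ ≤ mΩ) (hm₂ : m₂ ≤ mΩ) (hmm₂ : m ≤ m₂)
    (h : CondIndep m m₁ m₂ hm μ) (hs : MeasurableSet[m₁] s) :
    μ⟦s | m₂⟧ =ᵐ[μ] μ⟦s | m⟧ :=
  (ae_eq_condExp_of_forall_setIntegral_eq hm₂ ((integrable_const _).indicator (hm₁ s hs))
    (fun _ _ _ => integrable_condExp.integrableOn)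
    (fun _ ht _ => CondIndep.setIntegral_condExp_indicator hm₁ hm₂ h hs ht)
    (stronglyMeasurable_condExp.mono hmm₂).aestronglyMeasurable).symm

theorem CondIndep.sup_right_of_condIndep_sup (hm₁ : m₁ ≤ mΩ) (hm₂ : m₂ ≤ mΩ) (hm₃ : m₃ ≤ mΩ)
    (h₁₂ : CondIndep m m₁ m₂ hm μ) (h₁₃ : CondIndep (m ⊔ m₂) m₁ m₃ (sup_le hm hm₂) μ) :
    CondIndep m m₁ (m₂ ⊔ m₃) hm μ := by
  have hmm₂ : m ⊔ m₂ ≤ mΩ := sup_le hm hm₂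
  refine CondIndepSets.condIndep hm₁ (sup_le hm₂ hm₃) (@isPiSystem_measurableSet _ m₁)
    (isPiSystem_image2_inter (@isPiSystem_measurableSet _ m₂) (@isPiSystem_measurableSet _ m₃))
    (@generateFrom_measurableSet Ω m₁).symm (sup_eq_generateFrom_image2_inter m₂ m₃) ?_
  refine (condIndepSets_iff _ _ _ _ (fun s hs => hm₁ s hs) ?_ μ).2 ?_
  · rintro _ ⟨t, ht, u, hu, rfl⟩
    exact (hm₂ t ht).inter (hm₃ u hu)
  rintro s _ hs ⟨t, ht, u, hu, rfl⟩
  have ht' : MeasurableSet[m ⊔ m₂] t := le_sup_right (a := m) t ht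
  have h_s : μ⟦s | m ⊔ m₂⟧ =ᵐ[μ] μ⟦s | m⟧ :=
    CondIndep.condExp_indicator_ae_eq hm₁ hmm₂ le_sup_left
      (CondIndep.sup_self_right hm₁ hm₂ h₁₂) hs
  have h_su := (condIndep_iff _ _ _ _ hm₁ hm₃ μ).1 h₁₃ s u hs hu
  have h_stu : μ⟦s ∩ (t ∩ u) | m ⊔ m₂⟧ =ᵐ[μ] μ⟦s | m⟧ * μ⟦t ∩ u | m ⊔ m₂⟧ := by
    filter_upwards [condExp_indicator_inter_of_measurableSet_left (μ := μ) ht'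
        ((hm₁ s hs).inter (hm₃ u hu)),
      condExp_indicator_inter_of_measurableSet_left (μ := μ) ht' (hm₃ u hu), h_su, h_s]
      with ω h_tsu h_tu h_su h_s
    simp only [inter_left_comm s t u, h_tsu, h_tu, h_su, h_s, Pi.mul_apply]
    ring
  calc μ⟦s ∩ (t ∩ u) | m⟧
      =ᵐ[μ] μ[μ⟦s ∩ (t ∩ u) | m ⊔ m₂⟧ | m] := (condExp_condExp_of_le le_sup_left hmm₂).symm
    _ =ᵐ[μ] μ[μ⟦s | m⟧ * μ⟦t ∩ u | m ⊔ m₂⟧ | m] := condExp_congr_ae h_stu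
    _ =ᵐ[μ] μ⟦s | m⟧ * μ[μ⟦t ∩ u | m ⊔ m₂⟧ | m] :=
        condExp_stronglyMeasurable_mul_of_bound hm stronglyMeasurable_condExp integrable_condExp 1
          ae_norm_condExp_indicator_le_one
    _ =ᵐ[μ] μ⟦s | m⟧ * μ⟦t ∩ u | m⟧ :=
        Filter.EventuallyEq.rfl.mul (condExp_condExp_of_le le_sup_left hmm₂)

theorem CondIndep.condExp_cond_indicator_ae_eq (hm₁ : m₁ ≤ mΩ) (hm₂ : m₂ ≤ mΩ)
    (h : CondIndep m m₁ m₂ hm μ) (hs : MeasurableSet[m₁] s) (hA : MeasurableSet[m₂] A)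
    (hpos : ∀ᵐ ω ∂μ, 0 < (μ⟦A | m⟧) ω) :
    (μ[|A])⟦s | m⟧ =ᵐ[μ] μ⟦s | m⟧ := by
  have h' := CondIndep.sup_self_right hm₁ hm₂ h
  have hAm : MeasurableSet A := hm₂ A hA
  have h_cond : (μ[|A])⟦s | m⟧ =ᵐ[μ[|A]] μ⟦s | m⟧ := by
    refine (ae_eq_condExp_of_forall_setIntegral_eq hm ((integrable_const _).indicator (hm₁ s hs))
      (fun _ _ _ => ?_) (fun T hT _ => ?_) stronglyMeasurable_condExp.aestronglyMeasurable).symm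
    · exact (Integrable.of_bound (stronglyMeasurable_condExp.mono hm).aestronglyMeasurable 1
        (cond_absolutelyContinuous.ae_le ae_norm_condExp_indicator_le_one)).integrableOn
    · rw [setIntegral_cond (hm T hT), setIntegral_cond (hm T hT),
        CondIndep.setIntegral_condExp_indicator hm₁ (sup_le hm hm₂) h' hs
          ((le_sup_left (b := m₂) T hT).inter (le_sup_right (a := m) A hA))]
  have h_null : μ (A ∩ {ω | ¬((μ[|A])⟦s | m⟧) ω = (μ⟦s | m⟧) ω}) = 0 := by
    have h_apply := cond_apply hAm μ {ω | ¬((μ[|A])⟦s | m⟧) ω = (μ⟦s | m⟧) ω}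
    rw [ae_iff.1 h_cond, eq_comm, mul_eq_zero] at h_apply
    exact h_apply.resolve_left (ENNReal.inv_ne_zero.2 (measure_ne_top μ A))
  exact ae_iff.2 <| measure_eq_zero_of_measure_inter_eq_zero_of_condExp_pos hm hAm
    (stronglyMeasurable_condExp.measurableSet_eq_fun stronglyMeasurable_condExp).compl h_null hpos

theorem CondIndep.toReal_cond_eq_integral_condExp_cond (hm₁ : m₁ ≤ mΩ) (hm₂ : m₂ ≤ mΩ)
    (h : CondIndep m m₁ m₂ hm μ) (hs : MeasurableSet[m₁] s) (hA : MeasurableSet[m₂] A)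
    (hA' : MeasurableSet[m₂] A')
    (hpos : ∀ᵐ ω ∂μ, 0 < (μ⟦A' | m⟧) ω) :
    (μ[|A] s).toReal = ∫ ω, ((μ[|A'])⟦s | m⟧) ω ∂μ[|A] := by
  have h_univ (g : Ω → ℝ) : ∫ ω, g ω ∂μ[|A] = (μ A)⁻¹.toReal * ∫ ω in A, g ω ∂μ := by
    simpa using setIntegral_cond (μ := μ) (A := A) .univ g
  calc (μ[|A] s).toReal
      = ∫ ω, s.indicator (fun _ => (1 : ℝ)) ω ∂μ[|A] := (integral_indicator_one (hm₁ s hs)).symm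
    _ = ∫ ω, (μ⟦s | m⟧) ω ∂μ[|A] := by
        rw [h_univ, h_univ, CondIndep.setIntegral_condExp_indicator hm₁ (sup_le hm hm₂)
          (CondIndep.sup_self_right hm₁ hm₂ h) hs (le_sup_right (a := m) A hA)]
    _ = ∫ ω, ((μ[|A'])⟦s | m⟧) ω ∂μ[|A] := integral_congr_ae <| cond_absolutelyContinuous.ae_le <|
        (CondIndep.condExp_cond_indicator_ae_eq hm₁ hm₂ h hs hA' hpos).symm

end CondIndep

theorem stmt_0_general
    {Ω : Type*} [mΩ : MeasurableSpace Ω] [StandardBorelSpace Ω]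
    (P : Measure Ω) [IsProbabilityMeasure P]
    {k : ℕ} (X : Ω → (Fin k → ℝ)) (Y1 Y0 D R : Ω → ℝ)
    (hX : Measurable X) (hY1 : Measurable Y1) (hY0 : Measurable Y0)
    (hD : Measurable D) (hR : Measurable R)
    -- Assumption 1 (unconfoundedness): (Y(1), Y(0)) ⟂ D | X
    (hA1 : CondIndepFun (MeasurableSpace.comap X inferInstance) hX.comap_le
      (fun ω => (Y1 ω, Y0 ω)) D P)
    -- Assumption 2 (MAR): (Y(1), Y(0)) ⟂ R | (X, D)
    (hA2 : CondIndepFun (MeasurableSpace.comap (fun ω => (X ω, D ω)) inferInstance)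
      (Measurable.comap_le (hX.prodMk hD))
      (fun ω => (Y1 ω, Y0 ω)) R P)
    (d : ℝ)
    -- nonconformity score V_d = v_d(X, Y(d))
    (v : (Fin k → ℝ) × ℝ → ℝ) (hv : Measurable v)
    (V : Ω → ℝ) (hV : V = fun ω => v (X ω, if d = 1 then Y1 ω else Y0 ω))
    -- P(D = d, R = 1 | X) > 0 almost surely
    (hcondpos : ∀ᵐ ω ∂P,
      0 < MeasureTheory.condExp (MeasurableSpace.comap X inferInstance) P
        (Set.indicator {ω' | D ω' = d ∧ R ω' = 1} (fun _ => (1 : ℝ))) ω)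
    (η : ℝ) :
    (P[|{ω | D ω = 1 - d ∧ R ω = 1}] {ω | V ω < η}).toReal =
      ∫ ω, (MeasureTheory.condExp (MeasurableSpace.comap X inferInstance)
          (P[|{ω' | D ω' = d ∧ R ω' = 1}])
          (Set.indicator {ω' | V ω' < η} (fun _ => (1 : ℝ)))) ω
        ∂(P[|{ω' | D ω' = 1 - d ∧ R ω' = 1}])
    ∧ ∀ α : ℝ,
      (∫ ω, (MeasureTheory.condExp (MeasurableSpace.comap X inferInstance)
          (P[|{ω' | D ω' = d ∧ R ω' = 1}])
          (Set.indicator {ω' | V ω' < η} (fun _ => (1 : ℝ)))) ω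
        ∂(P[|{ω' | D ω' = 1 - d ∧ R ω' = 1}])) = 1 - α →
      (P[|{ω | D ω = 1 - d ∧ R ω = 1}] {ω | V ω < η}).toReal = 1 - α := by
  have hmX := hX.comap_le
  have hmY := (hY1.prodMk hY0).comap_le
  have hmD := hD.comap_le
  have hmR := hR.comap_le
  have h_YD := (condIndepFun_iff_condIndep _ _ _ _ P).1 hA1
  have h_YR : CondIndep
      (MeasurableSpace.comap X inferInstance ⊔ MeasurableSpace.comap D inferInstance)
      (MeasurableSpace.comap (fun ω => (Y1 ω, Y0 ω)) inferInstance)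
      (MeasurableSpace.comap R inferInstance) (sup_le hmX hmD) P := by
    convert (condIndepFun_iff_condIndep _ _ _ _ P).1 hA2 using 1
    exact (comap_prodMk X D).symm
  have h_XY_DR := CondIndep.sup_self_left hmY (sup_le hmD hmR)
    (CondIndep.sup_right_of_condIndep_sup hmY hmD hmR h_YD h_YR)
  have hVm : Measurable[MeasurableSpace.comap X inferInstance
      ⊔ MeasurableSpace.comap (fun ω => (Y1 ω, Y0 ω)) inferInstance] V := by
    rw [← comap_prodMk, hV]
    refine Measurable.comp (g := fun p : (Fin k → ℝ) × ℝ × ℝ =>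
      v (p.1, if d = 1 then p.2.1 else p.2.2)) ?_ (comap_measurable _)
    split_ifs <;> fun_prop
  have hDR (a : ℝ) : MeasurableSet[MeasurableSpace.comap D inferInstance
      ⊔ MeasurableSpace.comap R inferInstance] {ω | D ω = a ∧ R ω = 1} :=
    (le_sup_left (a := MeasurableSpace.comap D inferInstance) (D ⁻¹' {a})
      ⟨{a}, measurableSet_singleton a, rfl⟩).inter
    (le_sup_right (b := MeasurableSpace.comap R inferInstance) (R ⁻¹' {1})
      ⟨{1}, measurableSet_singleton 1, rfl⟩)
  have h_eq := CondIndep.toReal_cond_eq_integral_condExp_cond (sup_le hmX hmY) (sup_le hmD hmR)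
    h_XY_DR (hVm (measurableSet_Iio (a := η))) (hDR (1 - d)) (hDR d) hcondpos
  exact ⟨h_eq, fun α hα => h_eq.trans hα⟩

/-- Under unconfoundedness (Assumption 1) and MAR (Assumption 2), for each
`d ∈ {0,1}`, assuming `P(D = 1−d, R = 1) > 0` and `P(D = d, R = 1 | X) > 0` almost surely,
for every `η ∈ ℝ`:
`P(V_d < η | D = 1−d, R = 1) = E[ P(V_d < η | X, D = d, R = 1) | D = 1−d, R = 1 ]`.
In particular, if `η` is such that the right-hand side equals `1 − α`, then
`P(V_d < η | D = 1−d, R = 1) = 1 − α`. -/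
theorem stmt_0
    {Ω : Type*} [mΩ : MeasurableSpace Ω] [StandardBorelSpace Ω]
    (P : Measure Ω) [IsProbabilityMeasure P]
    {k : ℕ} (X : Ω → (Fin k → ℝ)) (Y1 Y0 D R : Ω → ℝ)
    (hX : Measurable X) (hY1 : Measurable Y1) (hY0 : Measurable Y0)
    (hD : Measurable D) (hR : Measurable R)
    (hDbin : ∀ ω, D ω = 0 ∨ D ω = 1) (hRbin : ∀ ω, R ω = 0 ∨ R ω = 1)
    -- Assumption 1 (unconfoundedness): (Y(1), Y(0)) ⟂ D | X
    (hA1 : CondIndepFun (MeasurableSpace.comap X inferInstance) hX.comap_le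
      (fun ω => (Y1 ω, Y0 ω)) D P)
    -- Assumption 2 (MAR): (Y(1), Y(0)) ⟂ R | (X, D)
    (hA2 : CondIndepFun (MeasurableSpace.comap (fun ω => (X ω, D ω)) inferInstance)
      (Measurable.comap_le (hX.prodMk hD))
      (fun ω => (Y1 ω, Y0 ω)) R P)
    (d : ℝ) (hd : d = 0 ∨ d = 1)
    -- nonconformity score V_d = v_d(X, Y(d))
    (v : (Fin k → ℝ) × ℝ → ℝ) (hv : Measurable v)
    (V : Ω → ℝ) (hV : V = fun ω => v (X ω, if d = 1 then Y1 ω else Y0 ω))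
    -- P(D = 1 − d, R = 1) > 0
    (hpos : 0 < P {ω | D ω = 1 - d ∧ R ω = 1})
    -- P(D = d, R = 1 | X) > 0 almost surely
    (hcondpos : ∀ᵐ ω ∂P,
      0 < MeasureTheory.condExp (MeasurableSpace.comap X inferInstance) P
        (Set.indicator {ω' | D ω' = d ∧ R ω' = 1} (fun _ => (1 : ℝ))) ω)
    (η : ℝ) :
    (P[|{ω | D ω = 1 - d ∧ R ω = 1}] {ω | V ω < η}).toReal =
      ∫ ω, (MeasureTheory.condExp (MeasurableSpace.comap X inferInstance)
          (P[|{ω' | D ω' = d ∧ R ω' = 1}])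
          (Set.indicator {ω' | V ω' < η} (fun _ => (1 : ℝ)))) ω
        ∂(P[|{ω' | D ω' = 1 - d ∧ R ω' = 1}])
    ∧ ∀ α : ℝ,
      (∫ ω, (MeasureTheory.condExp (MeasurableSpace.comap X inferInstance)
          (P[|{ω' | D ω' = d ∧ R ω' = 1}])
          (Set.indicator {ω' | V ω' < η} (fun _ => (1 : ℝ)))) ω
        ∂(P[|{ω' | D ω' = 1 - d ∧ R ω' = 1}])) = 1 - α →
      (P[|{ω | D ω = 1 - d ∧ R ω = 1}] {ω | V ω < η}).toReal = 1 - α :=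
  stmt_0_general (mΩ := mΩ) P X Y1 Y0 D R hX hY1 hY0 hD hR hA1 hA2 d v hv V hV hcondpos η
end

section
/- Suppose P(D = 1, R = 1) > 0 and P(D = 0, R = 1) > 0, and let C_0, C_1 be set-valued maps from ℝ^k to (measurable) subsets of ℝ with measurable graphs. If P(Y(0) ∈ C_0(X) | D = 1, R = 1) ≥ 1 − α and P(Y(1) ∈ C_1(X) | D = 0, R = 1) ≥ 1 − α, then, defining the interval-valued random set C_ITE := Y^obs − C_0(X) = {Y^obs − c : c ∈ C_0(X)} when D = 1 and C_ITE := C_1(X) − Y^obs when D = 0, where Y^obs := D·Y(1) + (1−D)·Y(0), it holds that P(Y(1) − Y(0) ∈ C_ITE | R = 1) ≥ 1 − α. -/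
open MeasureTheory ProbabilityTheory
open scoped ENNReal

/-- If the counterfactual prediction sets `C_0`, `C_1` satisfy
`P(Y(0) ∈ C_0(X) | D = 1, R = 1) ≥ 1 − α` and `P(Y(1) ∈ C_1(X) | D = 0, R = 1) ≥ 1 − α`,
then the ITE interval `C_ITE` (equal to `Y^obs − C_0(X)` when `D = 1` and to
`C_1(X) − Y^obs` when `D = 0`, with `Y^obs = D·Y(1) + (1−D)·Y(0)`) satisfies
`P(Y(1) − Y(0) ∈ C_ITE | R = 1) ≥ 1 − α`. -/
theorem stmt_2
    {Ω : Type*} [mΩ : MeasurableSpace Ω]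
    (P : Measure Ω) [IsProbabilityMeasure P]
    {k : ℕ} (X : Ω → (Fin k → ℝ)) (Y1 Y0 D R : Ω → ℝ)
    (hX : Measurable X) (hY1 : Measurable Y1) (hY0 : Measurable Y0)
    (hD : Measurable D) (hR : Measurable R)
    (hDbin : ∀ ω, D ω = 0 ∨ D ω = 1) (hRbin : ∀ ω, R ω = 0 ∨ R ω = 1)
    (hpos1 : 0 < P {ω | D ω = 1 ∧ R ω = 1})
    (hpos0 : 0 < P {ω | D ω = 0 ∧ R ω = 1})
    (C0 C1 : (Fin k → ℝ) → Set ℝ)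
    (hC0 : MeasurableSet {p : (Fin k → ℝ) × ℝ | p.2 ∈ C0 p.1})
    (hC1 : MeasurableSet {p : (Fin k → ℝ) × ℝ | p.2 ∈ C1 p.1})
    (α : ℝ) (hα : α ∈ Set.Ioo (0 : ℝ) 1)
    (Yobs : Ω → ℝ) (hYobs : Yobs = fun ω => D ω * Y1 ω + (1 - D ω) * Y0 ω)
    (hcov0 : 1 - α ≤ (P[|{ω | D ω = 1 ∧ R ω = 1}] {ω | Y0 ω ∈ C0 (X ω)}).toReal)
    (hcov1 : 1 - α ≤ (P[|{ω | D ω = 0 ∧ R ω = 1}] {ω | Y1 ω ∈ C1 (X ω)}).toReal) :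
    1 - α ≤ (P[|{ω | R ω = 1}]
      {ω | (D ω = 1 ∧ Y1 ω - Y0 ω ∈ (fun c => Yobs ω - c) '' C0 (X ω)) ∨
           (D ω = 0 ∧ Y1 ω - Y0 ω ∈ (fun c => c - Yobs ω) '' C1 (X ω))}).toReal := by
  obtain ⟨hα0, hα1⟩ := hα
  set A : Set Ω := {ω | Y0 ω ∈ C0 (X ω)} with hA
  set B : Set Ω := {ω | Y1 ω ∈ C1 (X ω)} with hB
  set s1 : Set Ω := {ω | D ω = 1 ∧ R ω = 1} with hs1
  set s0 : Set Ω := {ω | D ω = 0 ∧ R ω = 1} with hs0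
  set sR : Set Ω := {ω | R ω = 1} with hsR
  set E : Set Ω := {ω | (D ω = 1 ∧ Y1 ω - Y0 ω ∈ (fun c => Yobs ω - c) '' C0 (X ω)) ∨
           (D ω = 0 ∧ Y1 ω - Y0 ω ∈ (fun c => c - Yobs ω) '' C1 (X ω))} with hE
  have hms1 : MeasurableSet s1 :=
    (hD (measurableSet_singleton 1)).inter (hR (measurableSet_singleton 1))
  have hms0 : MeasurableSet s0 :=
    (hD (measurableSet_singleton 0)).inter (hR (measurableSet_singleton 1))
  have hmsR : MeasurableSet sR := hR (measurableSet_singleton 1)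
  have hmA : MeasurableSet A := (hX.prodMk hY0) hC0
  have hmB : MeasurableSet B := (hX.prodMk hY1) hC1
  -- key set identity
  have hkey : sR ∩ E = (s1 ∩ A) ∪ (s0 ∩ B) := by
    ext ω
    simp only [hE, hA, hB, hs1, hs0, hsR, Set.mem_inter_iff, Set.mem_union, Set.mem_setOf_eq,
      Set.mem_image, hYobs]
    constructor
    · rintro ⟨hr, h | h⟩
      · obtain ⟨hd, c, hc, hceq⟩ := h
        rw [hd] at hceq
        left
        refine ⟨⟨hd, hr⟩, ?_⟩
        have : c = Y0 ω := by nlinarith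
        rwa [this] at hc
      · obtain ⟨hd, c, hc, hceq⟩ := h
        rw [hd] at hceq
        right
        refine ⟨⟨hd, hr⟩, ?_⟩
        have : c = Y1 ω := by nlinarith
        rwa [this] at hc
    · rintro (⟨⟨hd, hr⟩, hy⟩ | ⟨⟨hd, hr⟩, hy⟩)
      · exact ⟨hr, Or.inl ⟨hd, Y0 ω, hy, by rw [hd]; ring⟩⟩
      · exact ⟨hr, Or.inr ⟨hd, Y1 ω, hy, by rw [hd]; ring⟩⟩
  have hdisj : Disjoint (s1 ∩ A) (s0 ∩ B) := by
    rw [Set.disjoint_left]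
    rintro ω ⟨⟨hd, _⟩, _⟩ ⟨⟨hd', _⟩, _⟩
    rw [hd] at hd'; norm_num at hd'
  have hsplit : P (sR ∩ E) = P (s1 ∩ A) + P (s0 ∩ B) := by
    rw [hkey, measure_union hdisj (hms0.inter hmB)]
  have hsRunion : sR = s1 ∪ s0 := by
    ext ω
    simp only [hsR, hs1, hs0, Set.mem_union, Set.mem_setOf_eq]
    rcases hDbin ω with h | h <;> simp [h] <;> tauto
  have hdisj2 : Disjoint s1 s0 := by
    rw [Set.disjoint_left]
    rintro ω ⟨hd, _⟩ ⟨hd', _⟩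
    rw [hd] at hd'; norm_num at hd'
  have hPR : P sR = P s1 + P s0 := by
    rw [hsRunion, measure_union hdisj2 hms0]
  set a1 := (P s1).toReal with ha1
  set a0 := (P s0).toReal with ha0
  have ha1pos : 0 < a1 := ENNReal.toReal_pos hpos1.ne' (measure_ne_top P _)
  have ha0pos : 0 < a0 := ENNReal.toReal_pos hpos0.ne' (measure_ne_top P _)
  have haR : (P sR).toReal = a1 + a0 := by
    rw [hPR, ENNReal.toReal_add (measure_ne_top P _) (measure_ne_top P _)]
  set m1 := (P (s1 ∩ A)).toReal with hm1
  set m0 := (P (s0 ∩ B)).toReal with hm0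
  have hcov0' : (1 - α) * a1 ≤ m1 := by
    rw [cond_apply hms1, ENNReal.toReal_mul, ENNReal.toReal_inv] at hcov0
    have := hcov0
    rw [inv_mul_eq_div, le_div_iff₀ ha1pos] at this
    linarith
  have hcov1' : (1 - α) * a0 ≤ m0 := by
    rw [cond_apply hms0, ENNReal.toReal_mul, ENNReal.toReal_inv] at hcov1
    have := hcov1
    rw [inv_mul_eq_div, le_div_iff₀ ha0pos] at this
    linarith
  rw [cond_apply hmsR, ENNReal.toReal_mul, ENNReal.toReal_inv, haR, hsplit,
    ENNReal.toReal_add (measure_ne_top P _) (measure_ne_top P _)]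
  rw [inv_mul_eq_div, le_div_iff₀ (by linarith)]
  calc (1 - α) * (a1 + a0) = (1 - α) * a1 + (1 - α) * a0 := by ring
    _ ≤ m1 + m0 := add_le_add hcov0' hcov1'
end

section
/- Let V_1, …, V_{n+1} be exchangeable real-valued random variables, i.e., for every permutation σ of {1, …, n+1}, (V_{σ(1)}, …, V_{σ(n+1)}) has the same joint distribution as (V_1, …, V_{n+1}). For α ∈ (0,1), let k := ⌈(1 − α)(n + 1)⌉ and define η̂ to be the k-th smallest value among V_1, …, V_n if k ≤ n, and η̂ := +∞ otherwise. Then P(V_{n+1} ≤ η̂) ≥ 1 − α. -/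
/-! Let the rank of index `j` be the number of scores strictly below `V j`. By the choice of
`η̂`, the event `V_{n+1} ≤ η̂` is exactly `rank (n+1) < k`, and in every vector of `n + 1` scores
at least `k` indices have rank `< k`. Summing indicators, `∑ⱼ P(rank j < k) ≥ k`; exchangeability
makes these `n + 1` probabilities equal, so each is at least `k / (n + 1) ≥ 1 - α`. -/

open MeasureTheory Finset
open scoped ENNReal

namespace Conformal

section OrderStatistic

variable {ι α : Type*} [Fintype ι]

def rank [LinearOrder α] (w : ι → α) (j : ι) : ℕ :=
  #{i | w i < w j}

theorem rank_comp_perm [LinearOrder α] (w : ι → α) (σ : Equiv.Perm ι) (j : ι) :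
    rank (w ∘ σ) j = rank w (σ j) := by
  simp only [rank, card_filter]
  exact Equiv.sum_comp σ (fun i => if w i < w (σ j) then 1 else 0)

variable [ConditionallyCompleteLinearOrder α]

noncomputable def orderStatistic (w : ι → α) (k : ℕ) : α :=
  sInf {t | k ≤ #{i | w i ≤ t}}

theorem le_orderStatistic_iff {w : ι → α} {k : ℕ} (hk₀ : 1 ≤ k) (hk : k ≤ Fintype.card ι)
    (x : α) : x ≤ orderStatistic w k ↔ #{i | w i < x} < k := by
  obtain ⟨M, hM⟩ := Finite.exists_le w
  obtain ⟨m, hm⟩ := Finite.exists_ge w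
  have hne : {t | k ≤ #{i | w i ≤ t}}.Nonempty :=
    ⟨M, by simpa [filter_true_of_mem fun i _ => hM i] using hk⟩
  have hbdd : BddBelow {t | k ≤ #{i | w i ≤ t}} := by
    refine ⟨m, fun t ht => ?_⟩
    obtain ⟨i, hi⟩ := card_pos.mp (hk₀.trans ht)
    exact (hm i).trans (mem_filter.mp hi).2
  rw [orderStatistic, le_csInf_iff hbdd hne]
  constructor
  · intro h
    by_contra! hx
    -- the largest value below `x` is a threshold `t < x` with as many values `≤ t` as `< x`
    obtain ⟨j, hj, hjmax⟩ := exists_max_image {i | w i < x} w (card_pos.mp (hk₀.trans hx))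
    refine (mem_filter.mp hj).2.not_ge (h (w j) (hx.trans (card_le_card fun i hi => ?_)))
    exact mem_filter.mpr ⟨mem_univ i, hjmax i hi⟩
  · intro h t ht
    by_contra! htx
    exact ht.not_gt (h.trans_le' (card_le_card fun i hi =>
      mem_filter.mpr ⟨mem_univ i, (mem_filter.mp hi).2.trans_lt htx⟩))

theorem le_card_filter_le_orderStatistic {w : ι → α} {k : ℕ} (hk₀ : 1 ≤ k)
    (hk : k ≤ Fintype.card ι) : k ≤ #{i | w i ≤ orderStatistic w k} := by
  set s := orderStatistic w k
  by_contra! hs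
  -- otherwise fewer than `k` values lie below the least value above `s`, which forces it `≤ s`
  obtain ⟨j, hj, hjmin⟩ := exists_min_image {i | s < w i} w (by
    by_contra! hempty
    rw [filter_eq_empty_iff] at hempty
    refine hs.not_ge (hk.trans_eq ?_)
    simp [filter_true_of_mem fun i _ => not_lt.mp (hempty (mem_univ i))])
  have hjs : w j ≤ s :=
    (le_orderStatistic_iff hk₀ hk (w j)).mpr (hs.trans_le' (card_le_card fun i hi => ?_))
  · exact (mem_filter.mp hj).2.not_ge hjs
  simp only [mem_filter, mem_univ, true_and] at hi ⊢
  by_contra! his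
  exact (hjmin i (mem_filter.mpr ⟨mem_univ i, his⟩)).not_gt hi

theorem le_card_filter_rank_lt {w : ι → α} {k : ℕ} (hk₀ : 1 ≤ k) (hk : k ≤ Fintype.card ι) :
    k ≤ #{j | rank w j < k} := by
  simpa only [rank, ← le_orderStatistic_iff hk₀ hk] using le_card_filter_le_orderStatistic hk₀ hk

theorem le_orderStatistic_castSucc_iff {n k : ℕ} (hk₀ : 1 ≤ k) (hk : k ≤ n) (w : Fin (n + 1) → α) :
    w (Fin.last n) ≤ orderStatistic (fun i : Fin n => w i.castSucc) k ↔
      rank w (Fin.last n) < k := by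
  rw [le_orderStatistic_iff hk₀ (by simpa using hk), rank, card_filter, card_filter,
    Fin.sum_univ_castSucc]
  simp

end OrderStatistic

def IsExchangeable {ι α : Type*} [MeasurableSpace α] (μ : Measure (ι → α)) : Prop :=
  ∀ σ : Equiv.Perm ι, μ.map (fun v => v ∘ σ) = μ

open scoped Classical in
theorem natCast_mul_le_sum_measure {ι X : Type*} [Fintype ι] [MeasurableSpace X] (μ : Measure X)
    {B : ι → Set X} (hB : ∀ j, MeasurableSet (B j)) {k : ℕ} (h : ∀ x, k ≤ #{j | x ∈ B j}) :
    k * μ Set.univ ≤ ∑ j, μ (B j) := calc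
  k * μ Set.univ = ∫⁻ _, (k : ℝ≥0∞) ∂μ := (lintegral_const _).symm
  _ ≤ ∫⁻ x, ∑ j, (B j).indicator 1 x ∂μ := lintegral_mono fun x => by
    simpa [Set.indicator_apply] using h x
  _ = ∑ j, μ (B j) := by
    rw [lintegral_finsetSum _ fun j _ => measurable_one.indicator (hB j)]
    simp only [lintegral_indicator_one (hB _)]

section Exchangeable

variable {ι α : Type*} [Fintype ι] [ConditionallyCompleteLinearOrder α] [TopologicalSpace α]
  [OrderClosedTopology α] [SecondCountableTopology α] [MeasurableSpace α] [OpensMeasurableSpace α]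

theorem measurableSet_rank_lt (j : ι) (k : ℕ) : MeasurableSet {v : ι → α | rank v j < k} := by
  have : (fun v : ι → α => rank v j) = fun v => ∑ i, if v i < v j then 1 else 0 := by
    funext v
    exact card_filter _ _
  refine (this ▸ measurable_sum _ fun i _ => Measurable.ite ?_ measurable_const measurable_const)
    measurableSet_Iio
  exact measurableSet_lt (measurable_pi_apply i) (measurable_pi_apply j)

theorem IsExchangeable.measure_rank_lt_eq {μ : Measure (ι → α)} (hμ : IsExchangeable μ) (k : ℕ)
    (i j : ι) : μ {v | rank v i < k} = μ {v | rank v j < k} := by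
  classical
  set σ := Equiv.swap i j
  have hσ : Measurable fun v : ι → α => v ∘ σ := by fun_prop
  have hpre : (fun v : ι → α => v ∘ σ) ⁻¹' {v | rank v i < k} = {v | rank v j < k} := by
    ext v
    simp [rank_comp_perm, σ]
  rw [← hpre, ← Measure.map_apply hσ (measurableSet_rank_lt i k), hμ σ]

theorem IsExchangeable.natCast_le_card_mul_measure_rank_lt {μ : Measure (ι → α)}
    [IsProbabilityMeasure μ] (hμ : IsExchangeable μ) {k : ℕ} (hk₀ : 1 ≤ k)
    (hk : k ≤ Fintype.card ι) (j : ι) : (k : ℝ≥0∞) ≤ Fintype.card ι * μ {v | rank v j < k} := calc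
  (k : ℝ≥0∞) = k * μ Set.univ := by simp
  _ ≤ ∑ i, μ {v | rank v i < k} :=
    natCast_mul_le_sum_measure μ (fun i => measurableSet_rank_lt i k)
      fun v => by simpa using le_card_filter_rank_lt (w := v) hk₀ hk
  _ = Fintype.card ι * μ {v | rank v j < k} := by
    simp [hμ.measure_rank_lt_eq k _ j]

end Exchangeable

end Conformal

open Conformal

/-- marginal coverage of split conformal prediction. If `V 0, …, V n`
(i.e. `V_1, …, V_{n+1}`) are exchangeable, `k = ⌈(1 − α)(n + 1)⌉` and `η̂` is the k-th
smallest of the first `n` values (`+∞`, i.e. the event is everything, if `k > n`), then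
`P(V_{n+1} ≤ η̂) ≥ 1 − α`. -/
theorem stmt_4
    {Ω : Type*} [mΩ : MeasurableSpace Ω]
    (P : Measure Ω) [IsProbabilityMeasure P]
    (n : ℕ) (V : Fin (n + 1) → Ω → ℝ) (hV : ∀ i, Measurable (V i))
    -- exchangeability: permuting the coordinates does not change the joint law
    (hexch : ∀ σ : Equiv.Perm (Fin (n + 1)),
      Measure.map (fun ω => fun i => V (σ i) ω) P = Measure.map (fun ω => fun i => V i ω) P)
    (α : ℝ) (hα : α ∈ Set.Ioo (0 : ℝ) 1)
    (k : ℕ) (hk : k = ⌈(1 - α) * (n + 1 : ℝ)⌉₊)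
    -- η̂ = k-th smallest value among V_1, …, V_n (when k ≤ n)
    (ηhat : Ω → ℝ)
    (hηhat : ηhat = fun ω =>
      sInf {t : ℝ | k ≤ (Finset.univ.filter (fun i : Fin n => V i.castSucc ω ≤ t)).card}) :
    1 - α ≤ (P (if k ≤ n then {ω | V (Fin.last n) ω ≤ ηhat ω} else Set.univ)).toReal := by
  obtain ⟨hα₀, hα₁⟩ := hα
  split_ifs with hkn
  swap
  · simp [hα₀.le]
  have hk₀ : 1 ≤ k := hk ▸ Nat.ceil_pos.mpr (by nlinarith)
  set T : Ω → Fin (n + 1) → ℝ := fun ω i => V i ω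
  have hT : Measurable T := measurable_pi_lambda _ hV
  have := Measure.isProbabilityMeasure_map (μ := P) hT.aemeasurable
  have hμ : IsExchangeable (P.map T) := fun σ => by
    rw [Measure.map_map (by fun_prop) hT]
    exact hexch σ
  have hevent : {ω | V (Fin.last n) ω ≤ ηhat ω} = T ⁻¹' {v | rank v (Fin.last n) < k} := by
    ext ω
    exact hηhat ▸ le_orderStatistic_castSucc_iff hk₀ hkn (T ω)
  have hbound := hμ.natCast_le_card_mul_measure_rank_lt hk₀ (by simpa using hkn.trans n.le_succ)
    (Fin.last n)
  have hbound_real : (k : ℝ) ≤ (n + 1) * (P.map T {v | rank v (Fin.last n) < k}).toReal := by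
    have := ENNReal.toReal_mono (by finiteness) hbound
    rwa [ENNReal.toReal_mul, ENNReal.toReal_natCast, ENNReal.toReal_natCast, Fintype.card_fin,
      Nat.cast_succ] at this
  have hceil : (1 - α) * (n + 1 : ℝ) ≤ k := hk ▸ Nat.le_ceil _
  rw [hevent, ← Measure.map_apply hT (measurableSet_rank_lt _ _)]
  nlinarith
end

section
/- Suppose P(R = 0) > 0 and 0 < P(R = 1 | X, D) < 1 almost surely, and let π_R(X, D) := P(R = 1 | X, D) / P(R = 0 | X, D) be the true response odds. Then, under Assumption 2 (MAR) and Assumption 3 (overlap), for every η ∈ ℝ and every measurable function m : ℝ × ℝ^k × {0,1} → [0,1]: P(V_C < η | R = 0) = 1 − γ + E[ ψ_C(η; m, π_R) ] / P(R = 0), where ψ_C(η; m, π) := (1 − R)·(m(η, X, D) − (1 − γ)) + (R / π(X, D))·(1{V_C < η} − m(η, X, D)). -/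
open MeasureTheory ProbabilityTheory

/-!
Under MAR, within each stratum of `(X, D)` responders and non-responders carry the same
conditional law of `(Y(1), Y(0))`, and the response odds `(1 - e) / e` turn the responder mass `e`
of a stratum into its non-responder mass `1 - e`. Hence `E[R (1 - e) / e · h(X, D, Y)]` equals
`E[(1 - R) h(X, D, Y)]` for every measurable `h`: on rectangles this is conditional independence
plus pulling `σ(X, D)`-measurable factors out of conditional expectations, and the π-λ theorem
does the rest. For `h = 1{V < η} - m(η, X, D)` the `m`-terms of `E[ψ_C]` cancel, leaving
`E[ψ_C] = P(V < η, R = 0) - (1 - γ) P(R = 0)`.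
-/

theorem one_sub_div_self_mem_Icc {c e : ℝ} (hc : 0 < c) (hce : c < e) (he : e ≤ 1) :
    (1 - e) / e ∈ Set.Icc 0 (1 / c) :=
  ⟨div_nonneg (by linarith) (hc.trans hce).le, div_le_div₀ zero_le_one (by linarith) hc hce.le⟩

section

variable {Ω : Type*} {m mΩ : MeasurableSpace Ω} {P : Measure Ω}

theorem setIntegral_mul_eq_of_mul_condExp_ae_eq (hm : m ≤ mΩ) [IsFiniteMeasure P]
    {w a b : Ω → ℝ} (hw : StronglyMeasurable[m] w) {C : ℝ} (hw_bdd : ∀ᵐ ω ∂P, ‖w ω‖ ≤ C)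
    (ha : Integrable a P) (hb : Integrable b P)
    (hab : (fun ω => w ω * P[a|m] ω) =ᵐ[P] P[b|m]) {T : Set Ω} (hT : MeasurableSet[m] T) :
    ∫ ω in T, w ω * a ω ∂P = ∫ ω in T, b ω ∂P := calc
  ∫ ω in T, w ω * a ω ∂P = ∫ ω in T, P[w * a|m] ω ∂P :=
    (setIntegral_condExp hm (ha.bdd_mul (hw.mono hm).aestronglyMeasurable hw_bdd) hT).symm
  _ = ∫ ω in T, P[b|m] ω ∂P :=
    setIntegral_congr_ae (hm T hT) <| ((condExp_stronglyMeasurable_mul_of_bound hm hw ha C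
      hw_bdd).trans hab).mono fun _ h _ => h
  _ = ∫ ω in T, b ω ∂P := setIntegral_condExp hm hb hT

theorem map_withDensity_ofReal_apply {γ : Type*} [MeasurableSpace γ] {F : Ω → ℝ}
    (hF : Integrable F P) (hF_nonneg : 0 ≤ᵐ[P] F) {W : Ω → γ} (hW : Measurable W)
    {C : Set γ} (hC : MeasurableSet C) :
    (P.withDensity fun ω => ENNReal.ofReal (F ω)).map W C =
      ENNReal.ofReal (∫ ω in W ⁻¹' C, F ω ∂P) := by
  rw [Measure.map_apply hW hC, withDensity_apply _ (hW hC),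
    ofReal_integral_eq_lintegral_ofReal hF.integrableOn (ae_restrict_of_ae hF_nonneg)]

theorem integral_map_withDensity_ofReal {γ : Type*} [MeasurableSpace γ] {F : Ω → ℝ}
    (hF : AEMeasurable F P) (hF_nonneg : 0 ≤ᵐ[P] F) {W : Ω → γ} (hW : Measurable W)
    {h : γ → ℝ} (hh : Measurable h) :
    ∫ y, h y ∂(P.withDensity fun ω => ENNReal.ofReal (F ω)).map W =
      ∫ ω, F ω * h (W ω) ∂P := by
  rw [integral_map hW.aemeasurable hh.aestronglyMeasurable,
    integral_withDensity_eq_integral_toReal_smul₀ hF.ennreal_ofReal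
      (ae_of_all _ fun _ => ENNReal.ofReal_lt_top)]
  refine integral_congr_ae (hF_nonneg.mono fun ω h => ?_)
  simp [ENNReal.toReal_ofReal h]

theorem integral_mul_comp_eq_of_forall_prod {α β : Type*} [MeasurableSpace α]
    [MeasurableSpace β] {W : Ω → α × β} (hW : Measurable W) {f g : Ω → ℝ}
    (hf : Integrable f P) (hg : Integrable g P) (hf_nonneg : 0 ≤ᵐ[P] f) (hg_nonneg : 0 ≤ᵐ[P] g)
    (hrect : ∀ ⦃s : Set α⦄ ⦃t : Set β⦄, MeasurableSet s → MeasurableSet t →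
      ∫ ω in W ⁻¹' (s ×ˢ t), f ω ∂P = ∫ ω in W ⁻¹' (s ×ˢ t), g ω ∂P)
    {h : α × β → ℝ} (hh : Measurable h) :
    ∫ ω, f ω * h (W ω) ∂P = ∫ ω, g ω * h (W ω) ∂P := by
  have : IsFiniteMeasure ((P.withDensity fun ω => ENNReal.ofReal (f ω)).map W) :=
    ⟨by simp [map_withDensity_ofReal_apply hf hf_nonneg hW MeasurableSet.univ]⟩
  have hmap : (P.withDensity fun ω => ENNReal.ofReal (f ω)).map W =
      (P.withDensity fun ω => ENNReal.ofReal (g ω)).map W :=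
    Measure.ext_prod fun hs ht => by
      rw [map_withDensity_ofReal_apply hf hf_nonneg hW (hs.prod ht),
        map_withDensity_ofReal_apply hg hg_nonneg hW (hs.prod ht), hrect hs ht]
  rw [← integral_map_withDensity_ofReal hf.aemeasurable hf_nonneg hW hh, hmap,
    integral_map_withDensity_ofReal hg.aemeasurable hg_nonneg hW hh]

theorem condExp_indicator_preimage_zero_of_binary [IsFiniteMeasure P]
    (hm : m ≤ mΩ) {R : Ω → ℝ} (hR : Measurable R) (hR_bin : ∀ ω, R ω = 0 ∨ R ω = 1) :
    P⟦R ⁻¹' {0} | m⟧ =ᵐ[P] fun ω => 1 - (P⟦R ⁻¹' {1} | m⟧) ω := by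
  have hind : (R ⁻¹' {0}).indicator (fun _ => (1 : ℝ)) =
      (fun _ => 1) - (R ⁻¹' {1}).indicator (fun _ => 1) := by
    ext ω
    rcases hR_bin ω with h | h <;> simp [Set.indicator, h]
  rw [hind]
  refine (condExp_sub (integrable_const _)
    ((integrable_const _).indicator (hR (measurableSet_singleton 1))) m).trans ?_
  rw [condExp_const hm]
  rfl

theorem indicator_mul_eq_mul_indicator_inter_of_binary {T : Set Ω} {R w : Ω → ℝ}
    (hR_bin : ∀ ω, R ω = 0 ∨ R ω = 1) :
    T.indicator (fun ω => R ω * w ω) =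
      fun ω => w ω * (T ∩ R ⁻¹' {1}).indicator (fun _ => (1 : ℝ)) ω := by
  ext ω
  by_cases hT : ω ∈ T <;> rcases hR_bin ω with h | h <;> simp_all [Set.indicator]

theorem indicator_one_sub_eq_indicator_inter_of_binary {T : Set Ω} {R : Ω → ℝ}
    (hR_bin : ∀ ω, R ω = 0 ∨ R ω = 1) :
    T.indicator (fun ω => 1 - R ω) = (T ∩ R ⁻¹' {0}).indicator (fun _ => (1 : ℝ)) := by
  ext ω
  by_cases hT : ω ∈ T <;> rcases hR_bin ω with h | h <;> simp_all [Set.indicator]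

theorem integrable_binary_mul_odds [IsFiniteMeasure P] {R e : Ω → ℝ} (hR : Measurable R)
    (hR_bin : ∀ ω, R ω = 0 ∨ R ω = 1) (he : Measurable e) {c : ℝ} (hc : 0 < c)
    (hoverlap : ∀ᵐ ω ∂P, c < e ω ∧ e ω < 1 - c) :
    Integrable (fun ω => R ω * ((1 - e ω) / e ω)) P := by
  refine Integrable.of_bound (by fun_prop) (1 / c) (hoverlap.mono fun ω hω => ?_)
  obtain ⟨h0, h1⟩ := one_sub_div_self_mem_Icc hc hω.1 (by linarith [hω.2])
  rcases hR_bin ω with h | h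
  · simp [h, hc.le]
  · rwa [h, one_mul, Real.norm_of_nonneg h0]

theorem integral_mul_odds_mul_comp_eq_of_condIndepFun [StandardBorelSpace Ω] [IsFiniteMeasure P]
    {α β : Type*} [mα : MeasurableSpace α] [MeasurableSpace β] {Z : Ω → α} {Y : Ω → β} {R e : Ω → ℝ}
    (hZ : Measurable Z) (hY : Measurable Y) (hR : Measurable R)
    (hR_bin : ∀ ω, R ω = 0 ∨ R ω = 1)
    (hMAR : CondIndepFun (mα.comap Z) hZ.comap_le Y R P)
    (he_meas : Measurable[mα.comap Z] e) (he : e =ᵐ[P] P⟦R ⁻¹' {1} | mα.comap Z⟧)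
    {c : ℝ} (hc : 0 < c) (hoverlap : ∀ᵐ ω ∂P, c < e ω ∧ e ω < 1 - c)
    {h : α × β → ℝ} (hh : Measurable h) :
    ∫ ω, R ω * ((1 - e ω) / e ω) * h (Z ω, Y ω) ∂P =
      ∫ ω, (1 - R ω) * h (Z ω, Y ω) ∂P := by
  set G := mα.comap Z
  set w : Ω → ℝ := fun ω => (1 - e ω) / e ω
  have hG : G ≤ mΩ := hZ.comap_le
  have hw_meas : Measurable[G] w := (measurable_const.sub he_meas).div he_meas
  have hw_odds : ∀ᵐ ω ∂P, w ω ∈ Set.Icc 0 (1 / c) ∧ w ω * e ω = 1 - e ω :=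
    hoverlap.mono fun ω hω => ⟨one_sub_div_self_mem_Icc hc hω.1 (by linarith [hω.2]),
      div_mul_cancel₀ _ (hc.trans hω.1).ne'⟩
  have hw_bdd : ∀ᵐ ω ∂P, ‖w ω‖ ≤ 1 / c := hw_odds.mono fun ω h => by
    rw [Real.norm_of_nonneg h.1.1]; exact h.1.2
  have hR0 := condExp_indicator_preimage_zero_of_binary (P := P) hG hR hR_bin
  refine integral_mul_comp_eq_of_forall_prod (W := fun ω => (Z ω, Y ω)) (g := fun ω => 1 - R ω)
    (hZ.prodMk hY) (integrable_binary_mul_odds hR hR_bin (he_meas.mono hG le_rfl) hc hoverlap)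
    (Integrable.of_bound (by fun_prop) 1 (ae_of_all _ fun ω => ?_))
    (hw_odds.mono fun ω h => ?_) (ae_of_all _ fun ω => ?_) (fun s t hs ht => ?_) hh
  · rcases hR_bin ω with hω | hω <;> simp [hω]
  · rcases hR_bin ω with hω | hω <;> simp [hω, h.1.1, w]
  · rcases hR_bin ω with hω | hω <;> simp [hω]
  have hab : (fun ω => w ω * (P⟦Y ⁻¹' t ∩ R ⁻¹' {1} | G⟧) ω) =ᵐ[P]
      P⟦Y ⁻¹' t ∩ R ⁻¹' {0} | G⟧ := by
    have hMAR' := (condIndepFun_iff_condExp_inter_preimage_eq_mul hY hR).1 hMAR t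
    filter_upwards [hMAR' {1} ht (measurableSet_singleton 1),
      hMAR' {0} ht (measurableSet_singleton 0), he, hR0, hw_odds] with ω h₁ h₀ heω hR0ω hw
    -- MAR factorizes both sides; the odds turn the factor `e` into `1 - e`.
    rw [h₁, h₀, hR0ω, ← heω]
    linear_combination (P⟦Y ⁻¹' t | G⟧) ω * hw.2
  rw [Set.mk_preimage_prod, ← setIntegral_indicator (hY ht), ← setIntegral_indicator (hY ht),
    indicator_mul_eq_mul_indicator_inter_of_binary hR_bin,
    indicator_one_sub_eq_indicator_inter_of_binary hR_bin]
  exact setIntegral_mul_eq_of_mul_condExp_ae_eq hG hw_meas.stronglyMeasurable hw_bdd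
    ((integrable_const 1).indicator ((hY ht).inter (hR (measurableSet_singleton 1))))
    ((integrable_const 1).indicator ((hY ht).inter (hR (measurableSet_singleton 0)))) hab
    ⟨s, hs, rfl⟩

theorem integral_augmented_odds_weighting_eq [IsFiniteMeasure P] {R w q : Ω → ℝ} {A : Set Ω}
    (hR : Measurable R) (hR_bin : ∀ ω, R ω = 0 ∨ R ω = 1)
    (hRw : Integrable (fun ω => R ω * w ω) P) (hq : Measurable q)
    (hq01 : ∀ ω, q ω ∈ Set.Icc 0 1) (hA : MeasurableSet A) (γ : ℝ)
    (hweight : ∫ ω, R ω * w ω * (A.indicator 1 ω - q ω) ∂P =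
      ∫ ω, (1 - R ω) * (A.indicator 1 ω - q ω) ∂P) :
    ∫ ω, ((1 - R ω) * (q ω - (1 - γ)) + R ω * w ω * (A.indicator 1 ω - q ω)) ∂P =
      P.real ({ω | R ω = 0} ∩ A) - (1 - γ) * P.real {ω | R ω = 0} := by
  have hS₀ : MeasurableSet {ω | R ω = 0} := hR (measurableSet_singleton 0)
  have h1R_bdd : ∀ᵐ ω ∂P, ‖1 - R ω‖ ≤ 1 :=
    ae_of_all _ fun ω => by rcases hR_bin ω with hω | hω <;> simp [hω]
  have hres_bdd : ∀ᵐ ω ∂P, ‖A.indicator 1 ω - q ω‖ ≤ 1 := ae_of_all _ fun ω => by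
    obtain ⟨hq0, hq1⟩ := hq01 ω
    rw [Real.norm_eq_abs, abs_le]
    by_cases hωA : ω ∈ A <;> simp [hωA] <;> constructor <;> linarith
  have hres : AEStronglyMeasurable (fun ω => A.indicator 1 ω - q ω) P :=
    ((measurable_const.indicator hA).sub hq).aestronglyMeasurable
  have hq_int : Integrable q P := .of_bound hq.aestronglyMeasurable 1 (ae_of_all _ fun ω => by
    rw [Real.norm_of_nonneg (hq01 ω).1]; exact (hq01 ω).2)
  have I₁ : Integrable (fun ω => (1 - R ω) * (q ω - (1 - γ))) P :=
    (hq_int.sub (integrable_const _)).bdd_mul (by fun_prop) h1R_bdd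
  have I₂ := hRw.mul_bdd hres hres_bdd
  have I₃ := (Integrable.of_bound hres 1 hres_bdd).bdd_mul (by fun_prop) h1R_bdd
  have hcollapse : ∀ ω, (1 - R ω) * (q ω - (1 - γ)) + (1 - R ω) * (A.indicator 1 ω - q ω) =
      ({ω | R ω = 0} ∩ A).indicator 1 ω - (1 - γ) * {ω | R ω = 0}.indicator 1 ω := fun ω => by
    rcases hR_bin ω with hω | hω <;> by_cases hωA : ω ∈ A <;> simp [hω, hωA]; ring
  rw [integral_add I₁ I₂, hweight, ← integral_add I₁ I₃,
    integral_congr_ae (ae_of_all _ hcollapse), integral_sub, integral_const_mul,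
    integral_indicator_one (hS₀.inter hA), integral_indicator_one hS₀]
  · exact (integrable_const 1).indicator (hS₀.inter hA)
  · exact ((integrable_const 1).indicator hS₀).const_mul _

end

theorem stmt_5_general
    {Ω : Type*} [mΩ : MeasurableSpace Ω] [StandardBorelSpace Ω]
    (P : Measure Ω) [IsProbabilityMeasure P]
    {k : ℕ} (X : Ω → (Fin k → ℝ)) (Y1 Y0 D R : Ω → ℝ)
    (hX : Measurable X) (hY1 : Measurable Y1) (hY0 : Measurable Y0)
    (hD : Measurable D) (hR : Measurable R)
    (hRbin : ∀ ω, R ω = 0 ∨ R ω = 1)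
    -- Assumption 2 (MAR): (Y(1), Y(0)) ⟂ R | (X, D)
    (hA2 : CondIndepFun (MeasurableSpace.comap (fun ω => (X ω, D ω)) inferInstance)
      (Measurable.comap_le (hX.prodMk hD))
      (fun ω => (Y1 ω, Y0 ω)) R P)
    -- nonconformity score V_C = v(X, D, Y(1), Y(0))
    (v : (Fin k → ℝ) × ℝ × ℝ × ℝ → ℝ) (hv : Measurable v)
    (V : Ω → ℝ) (hV : V = fun ω => v (X ω, D ω, Y1 ω, Y0 ω))
    (hpos : 0 < P {ω | R ω = 0})
    -- eR is (a version of) the response propensity P(R = 1 | X, D)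
    (eR : (Fin k → ℝ) → ℝ → ℝ) (heRmeas : Measurable fun p : (Fin k → ℝ) × ℝ => eR p.1 p.2)
    (heR : (fun ω => eR (X ω) (D ω)) =ᵐ[P]
      MeasureTheory.condExp (MeasurableSpace.comap (fun ω' => (X ω', D ω')) inferInstance) P
        (Set.indicator {ω' | R ω' = 1} (fun _ => (1 : ℝ))))
    -- Assumption 3 (overlap) for the response propensity; in particular
    -- 0 < P(R = 1 | X, D) < 1 almost surely
    (hoverlap : ∃ c : ℝ, 0 < c ∧ ∀ᵐ ω ∂P, c < eR (X ω) (D ω) ∧ eR (X ω) (D ω) < 1 - c)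
    (γ : ℝ)
    (m : ℝ → (Fin k → ℝ) → ℝ → ℝ)
    (hmmeas : Measurable fun p : ℝ × (Fin k → ℝ) × ℝ => m p.1 p.2.1 p.2.2)
    (hmbdd : ∀ η x d, m η x d ∈ Set.Icc (0 : ℝ) 1)
    (η : ℝ) :
    (P[|{ω | R ω = 0}] {ω | V ω < η}).toReal =
      1 - γ +
        (∫ ω, ((1 - R ω) * (m η (X ω) (D ω) - (1 - γ)) +
            (R ω / (eR (X ω) (D ω) / (1 - eR (X ω) (D ω)))) *
              ((if V ω < η then (1 : ℝ) else 0) - m η (X ω) (D ω))) ∂P) /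
          (P {ω | R ω = 0}).toReal := by
  obtain ⟨c, hc, hov⟩ := hoverlap
  set e : Ω → ℝ := fun ω => eR (X ω) (D ω)
  set q : Ω → ℝ := fun ω => m η (X ω) (D ω)
  set S₀ : Set Ω := {ω | R ω = 0}
  set A : Set Ω := {ω | V ω < η}
  have hS₀ : MeasurableSet S₀ := hR (measurableSet_singleton 0)
  have hq : Measurable q := hmmeas.comp (f := fun ω => (η, X ω, D ω)) (by fun_prop)
  have hA : MeasurableSet A := by subst hV; exact measurableSet_lt (by fun_prop) measurable_const
  have hweight := integral_mul_odds_mul_comp_eq_of_condIndepFun (e := e) (hX.prodMk hD)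
    (hY1.prodMk hY0) hR hRbin hA2 (heRmeas.comp (comap_measurable _)) heR hc hov
    (h := fun p => {p | v (p.1.1, p.1.2, p.2.1, p.2.2) < η}.indicator 1 p - m η p.1.1 p.1.2)
    ((measurable_one.indicator (measurableSet_lt (by fun_prop) measurable_const)).sub
      (hmmeas.comp (f := fun p : ((Fin k → ℝ) × ℝ) × ℝ × ℝ => (η, p.1.1, p.1.2)) (by fun_prop)))
  have hψ := integral_augmented_odds_weighting_eq (w := fun ω => (1 - e ω) / e ω) hR hRbin
    (integrable_binary_mul_odds hR hRbin (heRmeas.comp (hX.prodMk hD)) hc hov) hq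
    (fun ω => hmbdd η (X ω) (D ω)) hA γ (by subst hV; exact hweight)
  have hψ' : ∫ ω, ((1 - R ω) * (q ω - (1 - γ)) +
      R ω / (e ω / (1 - e ω)) * ((if V ω < η then (1 : ℝ) else 0) - q ω)) ∂P =
      P.real (S₀ ∩ A) - (1 - γ) * P.real S₀ := by
    rw [← hψ]
    congr 1 with ω
    rw [div_div_eq_mul_div, mul_div_assoc]
    simp [A, Set.indicator_apply]
  have hP₀ : P.real S₀ ≠ 0 := (ENNReal.toReal_pos hpos.ne' (measure_ne_top _ _)).ne'
  rw [hψ', cond_apply hS₀, ENNReal.toReal_mul, ENNReal.toReal_inv, ← measureReal_def,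
    ← measureReal_def]
  field_simp
  ring

/-- double-robust coverage, correct response odds: under MAR and overlap,
with the true response odds `π_R(X,D) = P(R=1|X,D)/P(R=0|X,D)`, for every `η` and every
measurable `m` with values in `[0,1]`:
`P(V_C < η | R = 0) = 1 − γ + E[ψ_C(η; m, π_R)] / P(R = 0)`, where
`ψ_C(η; m, π) = (1−R)(m(η,X,D) − (1−γ)) + (R/π(X,D))(1{V_C<η} − m(η,X,D))`. -/
theorem stmt_5
    {Ω : Type*} [mΩ : MeasurableSpace Ω] [StandardBorelSpace Ω]
    (P : Measure Ω) [IsProbabilityMeasure P]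
    {k : ℕ} (X : Ω → (Fin k → ℝ)) (Y1 Y0 D R : Ω → ℝ)
    (hX : Measurable X) (hY1 : Measurable Y1) (hY0 : Measurable Y0)
    (hD : Measurable D) (hR : Measurable R)
    (hDbin : ∀ ω, D ω = 0 ∨ D ω = 1) (hRbin : ∀ ω, R ω = 0 ∨ R ω = 1)
    -- Assumption 2 (MAR): (Y(1), Y(0)) ⟂ R | (X, D)
    (hA2 : CondIndepFun (MeasurableSpace.comap (fun ω => (X ω, D ω)) inferInstance)
      (Measurable.comap_le (hX.prodMk hD))
      (fun ω => (Y1 ω, Y0 ω)) R P)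
    -- nonconformity score V_C = v(X, D, Y(1), Y(0))
    (v : (Fin k → ℝ) × ℝ × ℝ × ℝ → ℝ) (hv : Measurable v)
    (V : Ω → ℝ) (hV : V = fun ω => v (X ω, D ω, Y1 ω, Y0 ω))
    (hpos : 0 < P {ω | R ω = 0})
    -- eR is (a version of) the response propensity P(R = 1 | X, D)
    (eR : (Fin k → ℝ) → ℝ → ℝ) (heRmeas : Measurable fun p : (Fin k → ℝ) × ℝ => eR p.1 p.2)
    (heR : (fun ω => eR (X ω) (D ω)) =ᵐ[P]
      MeasureTheory.condExp (MeasurableSpace.comap (fun ω' => (X ω', D ω')) inferInstance) P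
        (Set.indicator {ω' | R ω' = 1} (fun _ => (1 : ℝ))))
    -- Assumption 3 (overlap) for the response propensity; in particular
    -- 0 < P(R = 1 | X, D) < 1 almost surely
    (hoverlap : ∃ c : ℝ, 0 < c ∧ ∀ᵐ ω ∂P, c < eR (X ω) (D ω) ∧ eR (X ω) (D ω) < 1 - c)
    (γ : ℝ) (hγ : γ ∈ Set.Ioo (0 : ℝ) 1)
    (m : ℝ → (Fin k → ℝ) → ℝ → ℝ)
    (hmmeas : Measurable fun p : ℝ × (Fin k → ℝ) × ℝ => m p.1 p.2.1 p.2.2)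
    (hmbdd : ∀ η x d, m η x d ∈ Set.Icc (0 : ℝ) 1)
    (η : ℝ) :
    (P[|{ω | R ω = 0}] {ω | V ω < η}).toReal =
      1 - γ +
        (∫ ω, ((1 - R ω) * (m η (X ω) (D ω) - (1 - γ)) +
            (R ω / (eR (X ω) (D ω) / (1 - eR (X ω) (D ω)))) *
              ((if V ω < η then (1 : ℝ) else 0) - m η (X ω) (D ω))) ∂P) /
          (P {ω | R ω = 0}).toReal :=
  stmt_5_general (mΩ := mΩ) P X Y1 Y0 D R hX hY1 hY0 hD hR hRbin hA2 v hv V hV hpos eR heRmeas heR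
    hoverlap γ m hmmeas hmbdd η
end

section
/- Suppose P(R = 0) > 0 and P(R = 1 | X, D) > 0 almost surely, and let m_C(η, X, D) := P(V_C < η | X, D, R = 1) be the true conditional distribution function of the score on the responders. Then, under Assumption 2 (MAR) and Assumption 3 (overlap), for every η ∈ ℝ and every measurable function π : ℝ^k × {0,1} → ℝ bounded below by a positive constant: P(V_C < η | R = 0) = 1 − γ + E[ ψ_C(η; m_C, π) ] / P(R = 0), where ψ_C(η; m, π) := (1 − R)·(m(η, X, D) − (1 − γ)) + (R / π(X, D))·(1{V_C < η} − m(η, X, D)). -/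
open MeasureTheory ProbabilityTheory
open scoped ENNReal

/-!
Write `𝒢 = σ(X, D)`, `B = {R = 1}`, `A = {V_C < η}`, `ρ = P(B | 𝒢)` and `q = P(A | 𝒢)`.
Bayes' rule for the conditioned measure `P[|B]` turns the defining property of `m_C` into
`E[1_B m_C | 𝒢] = P(A ∩ B | 𝒢)`. Since `m_C` is `𝒢`-measurable the left side is `m_C ρ`; MAR,
once `𝒢` is adjoined to `σ(Y(1), Y(0))` so that it covers `A`, makes the right side `q ρ`, and
`ρ > 0` gives `m_C = q`. Hence the augmentation term of `ψ_C` has zero conditional mean given `𝒢`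
whatever the weight `1 / π`, while the outcome term integrates to
`P(A ∩ {R = 0}) - (1 - γ) P(R = 0)`.
-/

namespace ProbabilityTheory

open MeasurableSpace Set

variable {Ω : Type*}

section CondIndep

lemma isPiSystem_image2_inter {S T : Set (Set Ω)} (hS : IsPiSystem S) (hT : IsPiSystem T) :
    IsPiSystem (image2 (· ∩ ·) S T) := by
  rintro _ ⟨s₁, hs₁, t₁, ht₁, rfl⟩ _ ⟨s₂, hs₂, t₂, ht₂, rfl⟩ hne
  have hst : (s₁ ∩ s₂) ∩ (t₁ ∩ t₂) = s₁ ∩ t₁ ∩ (s₂ ∩ t₂) := by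
    rw [inter_inter_inter_comm]
  rw [← hst] at hne ⊢
  exact mem_image2_of_mem (hS _ hs₁ _ hs₂ (hne.mono inter_subset_left))
    (hT _ ht₁ _ ht₂ (hne.mono inter_subset_right))

lemma generateFrom_image2_inter (m₁ m₂ : MeasurableSpace Ω) :
    generateFrom (image2 (· ∩ ·) {s | MeasurableSet[m₁] s} {t | MeasurableSet[m₂] t}) =
      m₁ ⊔ m₂ := by
  refine le_antisymm (generateFrom_le ?_) (sup_le (fun s hs => ?_) (fun t ht => ?_))
  · rintro _ ⟨s, hs, t, ht, rfl⟩
    exact (le_sup_left (a := m₁) (b := m₂) s hs).inter (le_sup_right (a := m₁) (b := m₂) t ht)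
  · exact measurableSet_generateFrom ⟨s, hs, univ, MeasurableSet.univ, inter_univ s⟩
  · exact measurableSet_generateFrom ⟨univ, MeasurableSet.univ, t, ht, univ_inter t⟩

variable {m m₁ m₂ mΩ : MeasurableSpace Ω} {μ : Measure Ω}

lemma condExp_inter_ae_eq_indicator [IsFiniteMeasure μ] {s t : Set Ω}
    (hs : MeasurableSet[m] s) (ht : MeasurableSet t) :
    μ⟦s ∩ t | m⟧ =ᵐ[μ] s.indicator (μ⟦t | m⟧) := by
  rw [← indicator_indicator]
  exact condExp_indicator ((integrable_const 1).indicator ht) hs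

theorem CondIndep.sup_left_self [StandardBorelSpace Ω] {hm : m ≤ mΩ} [IsFiniteMeasure μ]
    (hm₁ : m₁ ≤ mΩ) (hm₂ : m₂ ≤ mΩ) (h : CondIndep m m₁ m₂ hm μ) :
    CondIndep m (m ⊔ m₁) m₂ hm μ := by
  refine CondIndepSets.condIndep (sup_le hm hm₁) hm₂
    (isPiSystem_image2_inter (@isPiSystem_measurableSet Ω m) (@isPiSystem_measurableSet Ω m₁))
    (@isPiSystem_measurableSet Ω m₂) (generateFrom_image2_inter m m₁).symm
    (@generateFrom_measurableSet Ω m₂).symm ?_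
  rw [condIndepSets_iff]
  · rintro _ t ⟨s, hs, a, ha, rfl⟩ ht
    filter_upwards [(condIndep_iff m m₁ m₂ hm hm₁ hm₂ μ).1 h a t ha ht,
      condExp_inter_ae_eq_indicator (μ := μ) hs ((hm₁ a ha).inter (hm₂ t ht)),
      condExp_inter_ae_eq_indicator (μ := μ) hs (hm₁ a ha)] with ω hat hsat hsa
    rw [inter_assoc, hsat, Pi.mul_apply, hsa]
    by_cases hω : ω ∈ s <;> simp [hω, hat]
  · rintro _ ⟨s, hs, a, ha, rfl⟩
    exact (hm s hs).inter (hm₁ a ha)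
  · exact hm₂

theorem CondIndepFun.prodMk_left_self {α β γ : Type*} [StandardBorelSpace Ω] [IsFiniteMeasure μ]
    [mα : MeasurableSpace α] [MeasurableSpace β] [MeasurableSpace γ]
    {Z : Ω → α} {Y : Ω → β} {R : Ω → γ} (hZ : Measurable Z) (hY : Measurable Y)
    (hR : Measurable R) (h : CondIndepFun (mα.comap Z) hZ.comap_le Y R μ) :
    CondIndepFun (mα.comap Z) hZ.comap_le (fun ω => (Z ω, Y ω)) R μ := by
  rw [condIndepFun_iff_condIndep] at h ⊢
  convert h.sup_left_self hY.comap_le hR.comap_le using 2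
  exact comap_prodMk Z Y

end CondIndep

section CondExpCond

variable {m mΩ : MeasurableSpace Ω} {μ : Measure Ω} {A B : Set Ω} {f g w : Ω → ℝ}

lemma measure_smul_cond [IsFiniteMeasure μ] (B : Set Ω) : μ B • μ[|B] = μ.restrict B := by
  rcases eq_or_ne (μ B) 0 with h | h
  · simp [h, Measure.restrict_eq_zero.2 h]
  · rw [cond, smul_smul, ENNReal.mul_inv_cancel h (measure_ne_top μ B), one_smul]

lemma _root_.MeasureTheory.Integrable.cond (hf : Integrable f μ) (B : Set Ω) :
    Integrable f μ[|B] := by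
  rcases eq_or_ne (μ B) 0 with h | h
  · simp [cond_eq_zero_of_meas_eq_zero h]
  · exact hf.restrict.smul_measure (ENNReal.inv_ne_top.2 h)

lemma setIntegral_indicator_eq_measureReal_mul_setIntegral_cond [IsFiniteMeasure μ] {s : Set Ω}
    (hs : MeasurableSet s) (hB : MeasurableSet B) (f : Ω → ℝ) :
    ∫ x in s, B.indicator f x ∂μ = μ.real B * ∫ x in s, f x ∂μ[|B] := by
  rw [setIntegral_indicator hB, ← Measure.restrict_restrict hs, ← measure_smul_cond (μ := μ) B,
    Measure.restrict_smul, integral_smul_measure, smul_eq_mul, measureReal_def]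

lemma condExp_indicator_ae_eq_mul_condExp [IsFiniteMeasure μ] (hB : MeasurableSet B)
    (hg : StronglyMeasurable[m] g) (hgi : Integrable g μ) :
    μ[B.indicator g | m] =ᵐ[μ] g * μ⟦B | m⟧ := by
  have h : B.indicator g = g * B.indicator fun _ => 1 := by
    ext ω; by_cases hω : ω ∈ B <;> simp [hω]
  rw [h]
  exact condExp_mul_of_stronglyMeasurable_left hg (h ▸ hgi.indicator hB)
    ((integrable_const 1).indicator hB)

theorem ae_eq_condExp_of_condExp_indicator_ae_eq [IsFiniteMeasure μ] (hB : MeasurableSet B)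
    (hAB : μ⟦A ∩ B | m⟧ =ᵐ[μ] μ⟦A | m⟧ * μ⟦B | m⟧) (hρ : ∀ᵐ ω ∂μ, 0 < (μ⟦B | m⟧) ω)
    (hg : StronglyMeasurable[m] g) (hgi : Integrable g μ)
    (hbayes : μ[B.indicator g | m] =ᵐ[μ] μ⟦A ∩ B | m⟧) :
    g =ᵐ[μ] μ⟦A | m⟧ := by
  filter_upwards [condExp_indicator_ae_eq_mul_condExp hB hg hgi, hbayes, hAB, hρ]
    with ω hmul hbayes hAB hρ
  simp only [Pi.mul_apply] at hmul hAB
  exact mul_right_cancel₀ hρ.ne' (hmul.symm.trans (hbayes.trans hAB))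

variable (hm : m ≤ mΩ) [IsFiniteMeasure μ]
include hm

theorem condExp_indicator_ae_eq_of_ae_eq_condExp_cond (hB : MeasurableSet B)
    (hf : Integrable f μ) (hgi : Integrable g μ)
    (hgf : g =ᵐ[μ[|B]] (μ[|B])[f | m]) :
    μ[B.indicator g | m] =ᵐ[μ] μ[B.indicator f | m] := by
  refine ae_eq_condExp_of_forall_setIntegral_eq hm (hf.indicator hB)
    (fun s _ _ => integrable_condExp.integrableOn) (fun s hs _ => ?_)
    stronglyMeasurable_condExp.aestronglyMeasurable
  rw [setIntegral_condExp hm (hgi.indicator hB) hs,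
    setIntegral_indicator_eq_measureReal_mul_setIntegral_cond (hm s hs) hB,
    setIntegral_indicator_eq_measureReal_mul_setIntegral_cond (hm s hs) hB,
    setIntegral_congr_ae (hm s hs) (hgf.mono fun ω h _ => h), setIntegral_condExp hm (hf.cond B) hs]

theorem condExp_indicator_ae_eq_condExp_inter (hA : MeasurableSet A) (hB : MeasurableSet B)
    (hgi : Integrable g μ) (hgA : g =ᵐ[μ[|B]] (μ[|B])[A.indicator fun _ => 1 | m]) :
    μ[B.indicator g | m] =ᵐ[μ] μ⟦A ∩ B | m⟧ := by
  rw [inter_comm, ← indicator_indicator]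
  exact condExp_indicator_ae_eq_of_ae_eq_condExp_cond hm hB
    ((integrable_const 1).indicator hA) hgi hgA

theorem setIntegral_compl_eq_measureReal_sdiff (hA : MeasurableSet A) (hB : MeasurableSet B)
    (hgi : Integrable g μ) (hbayes : μ[B.indicator g | m] =ᵐ[μ] μ⟦A ∩ B | m⟧)
    (hgA : g =ᵐ[μ] μ⟦A | m⟧) :
    ∫ ω in Bᶜ, g ω ∂μ = μ.real (A \ B) := by
  have hall : ∫ ω, g ω ∂μ = μ.real A := by
    rw [integral_congr_ae hgA, integral_condExp hm]
    exact integral_indicator_one hA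
  have hon : ∫ ω in B, g ω ∂μ = μ.real (A ∩ B) := by
    rw [← integral_indicator hB, ← integral_condExp hm, integral_congr_ae hbayes,
      integral_condExp hm]
    exact integral_indicator_one (hA.inter hB)
  linarith [integral_add_compl hB hgi, measureReal_sdiff_add_inter (μ := μ) (s := A) hB]

theorem integral_mul_indicator_sub_eq_zero (hA : MeasurableSet A) (hB : MeasurableSet B)
    (hgi : Integrable g μ) (hbayes : μ[B.indicator g | m] =ᵐ[μ] μ⟦A ∩ B | m⟧)
    (hw : StronglyMeasurable[m] w) {C : ℝ} (hwC : ∀ ω, ‖w ω‖ ≤ C) :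
    ∫ ω, w ω * B.indicator ((A.indicator fun _ => 1) - g) ω ∂μ = 0 := by
  have hsplit : B.indicator ((A.indicator fun _ => 1) - g) =
      ((A ∩ B).indicator fun _ => 1) - B.indicator g := by
    ext ω; by_cases hωA : ω ∈ A <;> by_cases hωB : ω ∈ B <;> simp [hωA, hωB]
  have hint : Integrable (B.indicator ((A.indicator fun _ => 1) - g)) μ :=
    (((integrable_const 1).indicator hA).sub hgi).indicator hB
  have hzero : μ[B.indicator ((A.indicator fun _ => 1) - g) | m] =ᵐ[μ] 0 := by
    rw [hsplit]
    filter_upwards [condExp_sub ((integrable_const 1).indicator (hA.inter hB))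
      (hgi.indicator hB) m, hbayes] with ω hsub hbayes
    rw [hsub, Pi.sub_apply, hbayes, sub_self, Pi.zero_apply]
  change ∫ ω, (w * B.indicator ((A.indicator fun _ => (1 : ℝ)) - g)) ω ∂μ = 0
  rw [← integral_condExp hm]
  refine integral_eq_zero_of_ae ?_
  filter_upwards [condExp_mul_of_stronglyMeasurable_left hw
    (hint.bdd_mul (hw.mono hm).aestronglyMeasurable (ae_of_all _ hwC)) hint, hzero]
    with ω hpull hzero
  rw [hpull, Pi.mul_apply, hzero, Pi.zero_apply, mul_zero]

theorem integral_augmented_ipw_eq (hA : MeasurableSet A) (hB : MeasurableSet B)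
    (hAB : μ⟦A ∩ B | m⟧ =ᵐ[μ] μ⟦A | m⟧ * μ⟦B | m⟧) (hρ : ∀ᵐ ω ∂μ, 0 < (μ⟦B | m⟧) ω)
    (hg : StronglyMeasurable[m] g) (hgi : Integrable g μ)
    (hgA : g =ᵐ[μ[|B]] (μ[|B])[A.indicator fun _ => 1 | m])
    (hw : StronglyMeasurable[m] w) {C : ℝ} (hwC : ∀ ω, ‖w ω‖ ≤ C) (c : ℝ) :
    ∫ ω, (Bᶜ.indicator (fun ω => g ω - c) ω +
        w ω * B.indicator ((A.indicator fun _ => 1) - g) ω) ∂μ =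
      μ.real (A \ B) - c * μ.real Bᶜ := by
  have hbayes := condExp_indicator_ae_eq_condExp_inter hm hA hB hgi hgA
  have hwi : Integrable (fun ω => w ω * B.indicator ((A.indicator fun _ => 1) - g) ω) μ :=
    ((((integrable_const 1).indicator hA).sub hgi).indicator hB).bdd_mul
      (hw.mono hm).aestronglyMeasurable (ae_of_all _ hwC)
  have hci : Integrable (fun ω => Bᶜ.indicator (fun ω => g ω - c) ω) μ :=
    (hgi.sub (integrable_const c)).indicator hB.compl
  rw [integral_add hci hwi,
    integral_mul_indicator_sub_eq_zero hm hA hB hgi hbayes hw hwC, integral_indicator hB.compl,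
    integral_sub hgi.integrableOn (integrable_const c).integrableOn,
    setIntegral_compl_eq_measureReal_sdiff hm hA hB hgi hbayes
      (ae_eq_condExp_of_condExp_indicator_ae_eq hB hAB hρ hg hgi hbayes),
    setIntegral_const, smul_eq_mul, add_zero, mul_comm]

theorem toReal_cond_eq_add_integral_div {R p : Ω → ℝ}
    (hR : Measurable R) (hRbin : ∀ ω, R ω = 0 ∨ R ω = 1) (hpos : 0 < μ {ω | R ω = 0})
    (hA : MeasurableSet A)
    (hAB : μ⟦A ∩ {ω | R ω = 1} | m⟧ =ᵐ[μ] μ⟦A | m⟧ * μ⟦{ω | R ω = 1} | m⟧)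
    (hρ : ∀ᵐ ω ∂μ, 0 < (μ⟦{ω | R ω = 1} | m⟧) ω)
    (hg : StronglyMeasurable[m] g) (hgi : Integrable g μ)
    (hgA : g =ᵐ[μ[|{ω | R ω = 1}]] (μ[|{ω | R ω = 1}])[A.indicator fun _ => 1 | m])
    (hp : Measurable[m] p) {c₀ : ℝ} (hc₀ : 0 < c₀) (hpc : ∀ ω, c₀ ≤ p ω) (c : ℝ) :
    (μ[|{ω | R ω = 0}] A).toReal =
      c + (∫ ω, ((1 - R ω) * (g ω - c) +
          R ω / p ω * (A.indicator (fun _ => 1) ω - g ω)) ∂μ) / (μ {ω | R ω = 0}).toReal := by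
  set B := {ω | R ω = 1}
  have hB : MeasurableSet B := hR (measurableSet_singleton 1)
  have hS0 : {ω | R ω = 0} = Bᶜ := by
    ext ω; rcases hRbin ω with h | h <;> simp [B, h]
  have hwC : ∀ ω, ‖(p ω)⁻¹‖ ≤ c₀⁻¹ := fun ω => by
    rw [norm_inv, Real.norm_of_nonneg (hc₀.trans_le (hpc ω)).le]
    exact inv_anti₀ hc₀ (hpc ω)
  have hψ : ∀ ω, (1 - R ω) * (g ω - c) + R ω / p ω * (A.indicator (fun _ => 1) ω - g ω) =
      Bᶜ.indicator (fun ω => g ω - c) ω +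
        (p ω)⁻¹ * B.indicator ((A.indicator fun _ => 1) - g) ω := fun ω => by
    rcases hRbin ω with h | h <;> simp [B, h, div_eq_mul_inv]
  rw [hS0] at hpos ⊢
  rw [integral_congr_ae (ae_of_all _ hψ),
    integral_augmented_ipw_eq (w := fun ω => (p ω)⁻¹) hm hA hB hAB hρ hg hgi hgA
      hp.inv.stronglyMeasurable hwC, cond_apply hB.compl,
    ENNReal.toReal_mul, ENNReal.toReal_inv, ← measureReal_def, ← measureReal_def, sdiff_eq,
    inter_comm]
  have : μ.real Bᶜ ≠ 0 := (ENNReal.toReal_pos hpos.ne' (measure_ne_top _ _)).ne'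
  field_simp
  ring

end CondExpCond

end ProbabilityTheory

theorem stmt_6_general
    {Ω : Type*} [mΩ : MeasurableSpace Ω] [StandardBorelSpace Ω]
    (P : Measure Ω) [IsProbabilityMeasure P]
    {k : ℕ} (X : Ω → (Fin k → ℝ)) (Y1 Y0 D R : Ω → ℝ)
    (hX : Measurable X) (hY1 : Measurable Y1) (hY0 : Measurable Y0)
    (hD : Measurable D) (hR : Measurable R)
    (hRbin : ∀ ω, R ω = 0 ∨ R ω = 1)
    -- Assumption 2 (MAR): (Y(1), Y(0)) ⟂ R | (X, D)
    (hA2 : CondIndepFun (MeasurableSpace.comap (fun ω => (X ω, D ω)) inferInstance)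
      (Measurable.comap_le (hX.prodMk hD))
      (fun ω => (Y1 ω, Y0 ω)) R P)
    -- nonconformity score V_C = v(X, D, Y(1), Y(0))
    (v : (Fin k → ℝ) × ℝ × ℝ × ℝ → ℝ) (hv : Measurable v)
    (V : Ω → ℝ) (hV : V = fun ω => v (X ω, D ω, Y1 ω, Y0 ω))
    (hpos : 0 < P {ω | R ω = 0})
    -- eR is (a version of) the response propensity P(R = 1 | X, D)
    (eR : (Fin k → ℝ) → ℝ → ℝ)
    (heR : (fun ω => eR (X ω) (D ω)) =ᵐ[P]
      MeasureTheory.condExp (MeasurableSpace.comap (fun ω' => (X ω', D ω')) inferInstance) P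
        (Set.indicator {ω' | R ω' = 1} (fun _ => (1 : ℝ))))
    -- Assumption 3 (overlap); in particular 0 < P(R = 1 | X, D) almost surely
    (hoverlap : ∃ c : ℝ, 0 < c ∧ ∀ᵐ ω ∂P, c < eR (X ω) (D ω) ∧ eR (X ω) (D ω) < 1 - c)
    (γ : ℝ)
    -- mC is (a version of) the true conditional CDF of V_C given (X, D) on the responders
    (mC : ℝ → (Fin k → ℝ) → ℝ → ℝ)
    (hmCmeas : Measurable fun p : ℝ × (Fin k → ℝ) × ℝ => mC p.1 p.2.1 p.2.2)
    (hmCbdd : ∀ η x d, mC η x d ∈ Set.Icc (0 : ℝ) 1)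
    (hmC : ∀ η : ℝ, (fun ω => mC η (X ω) (D ω)) =ᵐ[P[|{ω' | R ω' = 1}]]
      MeasureTheory.condExp (MeasurableSpace.comap (fun ω' => (X ω', D ω')) inferInstance)
        (P[|{ω' | R ω' = 1}])
        (Set.indicator {ω' | V ω' < η} (fun _ => (1 : ℝ))))
    -- π is measurable and bounded below by a positive constant
    (π : (Fin k → ℝ) → ℝ → ℝ) (hπmeas : Measurable fun p : (Fin k → ℝ) × ℝ => π p.1 p.2)
    (hπpos : ∃ c : ℝ, 0 < c ∧ ∀ x d, c ≤ π x d)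
    (η : ℝ) :
    (P[|{ω | R ω = 0}] {ω | V ω < η}).toReal =
      1 - γ +
        (∫ ω, ((1 - R ω) * (mC η (X ω) (D ω) - (1 - γ)) +
            (R ω / π (X ω) (D ω)) *
              ((if V ω < η then (1 : ℝ) else 0) - mC η (X ω) (D ω))) ∂P) /
          (P {ω | R ω = 0}).toReal := by
  obtain ⟨c, hc, hov⟩ := hoverlap
  obtain ⟨cπ, hcπ, hπc⟩ := hπpos
  have hZ : Measurable fun ω => (X ω, D ω) := hX.prodMk hD
  set A := {ω | V ω < η}
  have hvη : MeasurableSet {p : ((Fin k → ℝ) × ℝ) × ℝ × ℝ | v (p.1.1, p.1.2, p.2.1, p.2.2) < η} :=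
    measurableSet_lt (by fun_prop) measurable_const
  have hA : MeasurableSet A := by
    subst hV; exact hZ.prodMk (hY1.prodMk hY0) hvη
  -- `𝒢` acts as a local instance from here on, so `mΩ`-measurability is settled above.
  set 𝒢 := MeasurableSpace.comap (fun ω => (X ω, D ω)) inferInstance
  have hZ𝒢 : Measurable[𝒢] fun ω => (X ω, D ω) := Measurable.of_comap_le le_rfl
  have hAB : P⟦A ∩ {ω | R ω = 1} | 𝒢⟧ =ᵐ[P] P⟦A | 𝒢⟧ * P⟦{ω | R ω = 1} | 𝒢⟧ := by
    subst hV
    exact (condIndepFun_iff_condExp_inter_preimage_eq_mul (hZ.prodMk (hY1.prodMk hY0)) hR).1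
      (hA2.prodMk_left_self hZ (hY1.prodMk hY0) hR) _ {1} hvη (measurableSet_singleton 1)
  have hρ : ∀ᵐ ω ∂P, 0 < (P⟦{ω | R ω = 1} | 𝒢⟧) ω := by
    filter_upwards [heR, hov] with ω hω hcω
    exact hω ▸ hc.trans hcω.1
  have hg : StronglyMeasurable[𝒢] fun ω => mC η (X ω) (D ω) :=
    ((hmCmeas.comp (measurable_const.prodMk measurable_id)).comp hZ𝒢).stronglyMeasurable
  have hgi : Integrable (fun ω => mC η (X ω) (D ω)) P :=
    (integrable_const 1).mono' (hg.mono hZ.comap_le).aestronglyMeasurable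
      (ae_of_all _ fun ω => by
        rw [Real.norm_of_nonneg (hmCbdd η _ _).1]; exact (hmCbdd η _ _).2)
  rw [toReal_cond_eq_add_integral_div hZ.comap_le hR hRbin hpos hA hAB hρ hg hgi (hmC η)
    (hπmeas.comp hZ𝒢) hcπ (fun ω => hπc _ _) (1 - γ)]
  congr 3 with ω

/-- double-robust coverage, correct conditional CDF: under MAR and overlap,
with the true conditional score distribution `m_C(η,X,D) = P(V_C < η | X, D, R = 1)`,
for every `η` and every measurable `π` bounded below by a positive constant:
`P(V_C < η | R = 0) = 1 − γ + E[ψ_C(η; m_C, π)] / P(R = 0)`, where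
`ψ_C(η; m, π) = (1−R)(m(η,X,D) − (1−γ)) + (R/π(X,D))(1{V_C<η} − m(η,X,D))`. -/
theorem stmt_6
    {Ω : Type*} [mΩ : MeasurableSpace Ω] [StandardBorelSpace Ω]
    (P : Measure Ω) [IsProbabilityMeasure P]
    {k : ℕ} (X : Ω → (Fin k → ℝ)) (Y1 Y0 D R : Ω → ℝ)
    (hX : Measurable X) (hY1 : Measurable Y1) (hY0 : Measurable Y0)
    (hD : Measurable D) (hR : Measurable R)
    (hDbin : ∀ ω, D ω = 0 ∨ D ω = 1) (hRbin : ∀ ω, R ω = 0 ∨ R ω = 1)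
    -- Assumption 2 (MAR): (Y(1), Y(0)) ⟂ R | (X, D)
    (hA2 : CondIndepFun (MeasurableSpace.comap (fun ω => (X ω, D ω)) inferInstance)
      (Measurable.comap_le (hX.prodMk hD))
      (fun ω => (Y1 ω, Y0 ω)) R P)
    -- nonconformity score V_C = v(X, D, Y(1), Y(0))
    (v : (Fin k → ℝ) × ℝ × ℝ × ℝ → ℝ) (hv : Measurable v)
    (V : Ω → ℝ) (hV : V = fun ω => v (X ω, D ω, Y1 ω, Y0 ω))
    (hpos : 0 < P {ω | R ω = 0})
    -- eR is (a version of) the response propensity P(R = 1 | X, D)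
    (eR : (Fin k → ℝ) → ℝ → ℝ) (heRmeas : Measurable fun p : (Fin k → ℝ) × ℝ => eR p.1 p.2)
    (heR : (fun ω => eR (X ω) (D ω)) =ᵐ[P]
      MeasureTheory.condExp (MeasurableSpace.comap (fun ω' => (X ω', D ω')) inferInstance) P
        (Set.indicator {ω' | R ω' = 1} (fun _ => (1 : ℝ))))
    -- Assumption 3 (overlap); in particular 0 < P(R = 1 | X, D) almost surely
    (hoverlap : ∃ c : ℝ, 0 < c ∧ ∀ᵐ ω ∂P, c < eR (X ω) (D ω) ∧ eR (X ω) (D ω) < 1 - c)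
    (γ : ℝ) (hγ : γ ∈ Set.Ioo (0 : ℝ) 1)
    -- mC is (a version of) the true conditional CDF of V_C given (X, D) on the responders
    (mC : ℝ → (Fin k → ℝ) → ℝ → ℝ)
    (hmCmeas : Measurable fun p : ℝ × (Fin k → ℝ) × ℝ => mC p.1 p.2.1 p.2.2)
    (hmCbdd : ∀ η x d, mC η x d ∈ Set.Icc (0 : ℝ) 1)
    (hmC : ∀ η : ℝ, (fun ω => mC η (X ω) (D ω)) =ᵐ[P[|{ω' | R ω' = 1}]]
      MeasureTheory.condExp (MeasurableSpace.comap (fun ω' => (X ω', D ω')) inferInstance)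
        (P[|{ω' | R ω' = 1}])
        (Set.indicator {ω' | V ω' < η} (fun _ => (1 : ℝ))))
    -- π is measurable and bounded below by a positive constant
    (π : (Fin k → ℝ) → ℝ → ℝ) (hπmeas : Measurable fun p : (Fin k → ℝ) × ℝ => π p.1 p.2)
    (hπpos : ∃ c : ℝ, 0 < c ∧ ∀ x d, c ≤ π x d)
    (η : ℝ) :
    (P[|{ω | R ω = 0}] {ω | V ω < η}).toReal =
      1 - γ +
        (∫ ω, ((1 - R ω) * (mC η (X ω) (D ω) - (1 - γ)) +
            (R ω / π (X ω) (D ω)) *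
              ((if V ω < η then (1 : ℝ) else 0) - mC η (X ω) (D ω))) ∂P) /
          (P {ω | R ω = 0}).toReal :=
  stmt_6_general (mΩ := mΩ) P X Y1 Y0 D R hX hY1 hY0 hD hR hRbin hA2 v hv V hV hpos eR heR hoverlap
    γ mC hmCmeas hmCbdd hmC π hπmeas hπpos η
end

section
/- Suppose 0 < P(R = 0) < 1 and 0 < P(R = 1 | X, D) < 1 almost surely, and assume the conditional law of (X, D) given R = 0 is absolutely continuous with respect to the conditional law of (X, D) given R = 1, with Radon–Nikodym derivative w(X, D). Then for every η ∈ ℝ and γ ∈ (0,1): E[ P(R = 0 | X, D) · ( P(V_C < η | X, D, R = 1) − (1 − γ) ) ] = P(R = 0) · ( E[ w(X, D) · 1{V_C < η} | R = 1 ] − (1 − γ) ). -/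
/-!
The non-response probability `P(R = 0 | X, D)` is `1 - eR (X, D)`, and `mC η (X, D) - (1 - γ)` is
`(X, D)`-measurable, so by the pull-out property the left side equals
`P(R = 0) · (E[mC η (X, D) | R = 0] - (1 - γ))`. The density `w` moves this expectation of a
function of `(X, D)` to the responders,
`E[mC η (X, D) | R = 0] = E[w (X, D) · mC η (X, D) | R = 1]`, and since `w (X, D)` is
`(X, D)`-measurable and `mC η (X, D) = E[1{V < η} | X, D, R = 1]`, the tower property
replaces `mC η (X, D)` by `1{V < η}`.
-/

open MeasureTheory ProbabilityTheory
open scoped ENNReal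

section CondExp

variable {Ω : Type*} {m m₀ : MeasurableSpace Ω} {μ : Measure Ω}

theorem integral_mul_condExp_of_stronglyMeasurable (hm : m ≤ m₀) [SigmaFinite (μ.trim hm)]
    {f g : Ω → ℝ} (hg : StronglyMeasurable[m] g) (hgf : Integrable (g * f) μ)
    (hf : Integrable f μ) :
    ∫ ω, g ω * μ[f | m] ω ∂μ = ∫ ω, g ω * f ω ∂μ := by
  calc ∫ ω, g ω * μ[f | m] ω ∂μ = ∫ ω, μ[g * f | m] ω ∂μ :=
        integral_congr_ae (condExp_mul_of_stronglyMeasurable_left hg hgf hf).symm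
    _ = ∫ ω, g ω * f ω ∂μ := integral_condExp hm

theorem condExp_indicator_compl_one [IsFiniteMeasure μ] (hm : m ≤ m₀) {s : Set Ω}
    (hs : MeasurableSet[m₀] s) :
    μ[sᶜ.indicator (fun _ => (1 : ℝ)) | m] =ᵐ[μ]
      fun ω => 1 - μ[s.indicator (fun _ => 1) | m] ω := by
  rw [Set.indicator_compl]
  filter_upwards [condExp_sub (integrable_const (1 : ℝ)) ((integrable_const 1).indicator hs) m]
    with ω hω
  rw [hω, Pi.sub_apply, condExp_const hm]

end CondExp

theorem integral_indicator_eq_measureReal_mul_integral_cond {Ω : Type*} [MeasurableSpace Ω]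
    {μ : Measure Ω} [IsFiniteMeasure μ] {s : Set Ω} (hs : MeasurableSet s) (g : Ω → ℝ) :
    ∫ ω, s.indicator g ω ∂μ = μ.real s * ∫ ω, g ω ∂μ[|s] := by
  rcases eq_or_ne (μ s) 0 with h0 | h0
  · simp [integral_indicator hs, Measure.restrict_eq_zero.mpr h0, measureReal_def, h0]
  rw [integral_indicator hs, ProbabilityTheory.cond, integral_smul_measure, smul_eq_mul,
    ENNReal.toReal_inv, measureReal_def,
    mul_inv_cancel_left₀ (ENNReal.toReal_ne_zero.mpr ⟨h0, measure_ne_top μ s⟩)]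

section Density

variable {α β : Type*} [MeasurableSpace α] [MeasurableSpace β] {μ ν : Measure α}
  {f : α → β} {w : β → ℝ}

theorem integral_comp_eq_integral_mul_of_map_eq_withDensity (hf : Measurable f)
    (hw : Measurable w) (hw₀ : ∀ b, 0 ≤ w b)
    (hμν : μ.map f = (ν.map f).withDensity fun b => ENNReal.ofReal (w b))
    {h : β → ℝ} (hh : Measurable h) :
    ∫ a, h (f a) ∂μ = ∫ a, w (f a) * h (f a) ∂ν := by
  rw [← integral_map hf.aemeasurable hh.aestronglyMeasurable, hμν,
    integral_withDensity_eq_integral_toReal_smul hw.ennreal_ofReal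
      (Filter.Eventually.of_forall fun _ => ENNReal.ofReal_lt_top)]
  simp only [ENNReal.toReal_ofReal (hw₀ _), smul_eq_mul]
  exact integral_map hf.aemeasurable (hw.mul hh).aestronglyMeasurable

theorem integrable_comp_of_map_eq_withDensity [IsFiniteMeasure μ] (hf : Measurable f)
    (hw : Measurable w) (hw₀ : ∀ b, 0 ≤ w b)
    (hμν : μ.map f = (ν.map f).withDensity fun b => ENNReal.ofReal (w b)) :
    Integrable (fun a => w (f a)) ν := by
  have hfin : ∫⁻ b, ENNReal.ofReal (w b) ∂ν.map f ≠ ∞ := by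
    rw [← setLIntegral_univ, ← withDensity_apply _ MeasurableSet.univ, ← hμν]
    exact measure_ne_top _ _
  exact ((lintegral_ofReal_ne_top_iff_integrable hw.aestronglyMeasurable
    (Filter.Eventually.of_forall hw₀)).mp hfin).comp_measurable hf

end Density

section CompMeasurable

variable {Ω β : Type*} [MeasurableSpace Ω] [mβ : MeasurableSpace β] {μ : Measure Ω}
  [IsFiniteMeasure μ] {Z : Ω → β} {s : Set Ω}

theorem integral_comp_mul_condExp_indicator (hZ : Measurable Z) {g : β → ℝ}
    (hg : Measurable g) (hgZ : Integrable (fun ω => g (Z ω)) μ) (hs : MeasurableSet s) :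
    ∫ ω, g (Z ω) * μ[s.indicator (fun _ => 1) | mβ.comap Z] ω ∂μ =
      ∫ ω, g (Z ω) * s.indicator (fun _ => 1) ω ∂μ := by
  have hind : Integrable (s.indicator fun _ => (1 : ℝ)) μ := (integrable_const 1).indicator hs
  refine integral_mul_condExp_of_stronglyMeasurable hZ.comap_le
    (hg.comp (comap_measurable Z)).stronglyMeasurable ?_ hind
  refine hgZ.mul_bdd (c := 1) hind.aestronglyMeasurable (.of_forall fun ω => ?_)
  by_cases hω : ω ∈ s <;> simp [hω]

theorem integral_one_sub_mul_comp_eq_measureReal_mul_integral_cond (hZ : Measurable Z)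
    (hs : MeasurableSet s) {e : Ω → ℝ}
    (he : e =ᵐ[μ] μ[sᶜ.indicator (fun _ => 1) | mβ.comap Z])
    {g : β → ℝ} (hg : Measurable g) (hgZ : Integrable (fun ω => g (Z ω)) μ) :
    ∫ ω, (1 - e ω) * g (Z ω) ∂μ = μ.real s * ∫ ω, g (Z ω) ∂μ[|s] := by
  calc ∫ ω, (1 - e ω) * g (Z ω) ∂μ
      = ∫ ω, g (Z ω) * μ[s.indicator (fun _ => 1) | mβ.comap Z] ω ∂μ := by
        refine integral_congr_ae ?_
        filter_upwards [he, condExp_indicator_compl_one hZ.comap_le hs] with ω h₁ h₂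
        rw [h₁, h₂, sub_sub_cancel, mul_comm]
    _ = ∫ ω, g (Z ω) * s.indicator (fun _ => 1) ω ∂μ :=
        integral_comp_mul_condExp_indicator hZ hg hgZ hs
    _ = μ.real s * ∫ ω, g (Z ω) ∂μ[|s] := by
        rw [← integral_indicator_eq_measureReal_mul_integral_cond hs]
        congr with ω
        by_cases hω : ω ∈ s <;> simp [hω]

theorem integral_comp_mul_eq_of_ae_eq_condExp_indicator (hZ : Measurable Z) {w φ : β → ℝ}
    (hw : Measurable w) (hwZ : Integrable (fun ω => w (Z ω)) μ) (hs : MeasurableSet s)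
    (hφ : (fun ω => φ (Z ω)) =ᵐ[μ] μ[s.indicator (fun _ => 1) | mβ.comap Z]) :
    ∫ ω, w (Z ω) * φ (Z ω) ∂μ = ∫ ω, w (Z ω) * s.indicator (fun _ => 1) ω ∂μ := by
  rw [integral_congr_ae (hφ.mono fun ω h => congrArg (w (Z ω) * ·) h)]
  exact integral_comp_mul_condExp_indicator hZ hw hwZ hs

end CompMeasurable

theorem stmt_8_general
    {Ω : Type*} [mΩ : MeasurableSpace Ω]
    (P : Measure Ω) [IsProbabilityMeasure P]
    {k : ℕ} (X : Ω → (Fin k → ℝ)) (Y1 Y0 D R : Ω → ℝ)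
    (hX : Measurable X) (hY1 : Measurable Y1) (hY0 : Measurable Y0)
    (hD : Measurable D) (hR : Measurable R)
    (hRbin : ∀ ω, R ω = 0 ∨ R ω = 1)
    -- nonconformity score V_C = v(X, D, Y(1), Y(0))
    (v : (Fin k → ℝ) × ℝ × ℝ × ℝ → ℝ) (hv : Measurable v)
    (V : Ω → ℝ) (hV : V = fun ω => v (X ω, D ω, Y1 ω, Y0 ω))
    -- 0 < P(R = 0) < 1
    (hpos0 : 0 < P {ω | R ω = 0})
    -- eR is (a version of) the response propensity P(R = 1 | X, D),
    (eR : (Fin k → ℝ) → ℝ → ℝ)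
    (heR : (fun ω => eR (X ω) (D ω)) =ᵐ[P]
      MeasureTheory.condExp (MeasurableSpace.comap (fun ω' => (X ω', D ω')) inferInstance) P
        (Set.indicator {ω' | R ω' = 1} (fun _ => (1 : ℝ))))
    -- mC is (a version of) the conditional CDF of V_C given (X, D) on the responders
    (mC : ℝ → (Fin k → ℝ) → ℝ → ℝ)
    (hmCmeas : Measurable fun p : ℝ × (Fin k → ℝ) × ℝ => mC p.1 p.2.1 p.2.2)
    (hmCbdd : ∀ η x d, mC η x d ∈ Set.Icc (0 : ℝ) 1)
    (hmC : ∀ η : ℝ, (fun ω => mC η (X ω) (D ω)) =ᵐ[P[|{ω' | R ω' = 1}]]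
      MeasureTheory.condExp (MeasurableSpace.comap (fun ω' => (X ω', D ω')) inferInstance)
        (P[|{ω' | R ω' = 1}])
        (Set.indicator {ω' | V ω' < η} (fun _ => (1 : ℝ))))
    -- w is the Radon–Nikodym derivative of Law(X, D | R = 0) w.r.t. Law(X, D | R = 1)
    (w : (Fin k → ℝ) → ℝ → ℝ) (hwmeas : Measurable fun p : (Fin k → ℝ) × ℝ => w p.1 p.2)
    (hwnonneg : ∀ x d, 0 ≤ w x d)
    (hw : Measure.map (fun ω => (X ω, D ω)) (P[|{ω | R ω = 0}]) =
      (Measure.map (fun ω => (X ω, D ω)) (P[|{ω | R ω = 1}])).withDensity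
        (fun p => ENNReal.ofReal (w p.1 p.2)))
    (η : ℝ) (γ : ℝ) :
    (∫ ω, (1 - eR (X ω) (D ω)) * (mC η (X ω) (D ω) - (1 - γ)) ∂P) =
      (P {ω | R ω = 0}).toReal *
        ((∫ ω, w (X ω) (D ω) * (if V ω < η then (1 : ℝ) else 0) ∂(P[|{ω' | R ω' = 1}]))
          - (1 - γ)) := by
  have hZ : Measurable fun ω => (X ω, D ω) := hX.prodMk hD
  have hs₀ : MeasurableSet {ω | R ω = 0} := hR (measurableSet_singleton 0)
  have hs₁ : {ω | R ω = 1} = {ω | R ω = 0}ᶜ := by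
    ext ω; rcases hRbin ω with h | h <;> simp [h]
  rw [hs₁] at heR hmC hw ⊢
  have : IsProbabilityMeasure P[|{ω | R ω = 0}] := cond_isProbabilityMeasure hpos0.ne'
  have hmCη : Measurable fun p : (Fin k → ℝ) × ℝ => mC η p.1 p.2 :=
    hmCmeas.comp (measurable_const.prodMk measurable_id)
  have hmC_int (μ : Measure Ω) [IsFiniteMeasure μ] :
      Integrable (fun ω => mC η (X ω) (D ω)) μ :=
    .of_bound (hmCη.comp hZ).aestronglyMeasurable 1 (.of_forall fun ω => by
      obtain ⟨h₀, h₁⟩ := hmCbdd η (X ω) (D ω)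
      rwa [Real.norm_of_nonneg h₀])
  have hVη : MeasurableSet {ω | V ω < η} := by
    subst hV
    exact measurableSet_lt (hv.comp (hX.prodMk (hD.prodMk (hY1.prodMk hY0)))) measurable_const
  have h_responders := integral_comp_mul_eq_of_ae_eq_condExp_indicator
    (φ := fun p => mC η p.1 p.2) hZ hwmeas
    (integrable_comp_of_map_eq_withDensity hZ hwmeas (fun p => hwnonneg p.1 p.2) hw) hVη (hmC η)
  rw [integral_one_sub_mul_comp_eq_measureReal_mul_integral_cond
      (g := fun p => mC η p.1 p.2 - (1 - γ)) hZ hs₀ heR (hmCη.sub measurable_const)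
      ((hmC_int P).sub (integrable_const _)),
    integral_sub (hmC_int _) (integrable_const _), integral_const, probReal_univ, one_smul,
    integral_comp_eq_integral_mul_of_map_eq_withDensity hZ hwmeas (fun p => hwnonneg p.1 p.2) hw
      hmCη, h_responders]
  simp only [Set.indicator_apply, Set.mem_ofPred_eq, measureReal_def]

/-- with `w` the density of `Law(X,D | R = 0)` w.r.t. `Law(X,D | R = 1)`,
for every `η` and `γ ∈ (0,1)`:
`E[ P(R=0|X,D) · (P(V_C<η|X,D,R=1) − (1−γ)) ]
  = P(R=0) · ( E[w(X,D)·1{V_C<η} | R=1] − (1−γ) )`. -/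
theorem stmt_8
    {Ω : Type*} [mΩ : MeasurableSpace Ω] [StandardBorelSpace Ω]
    (P : Measure Ω) [IsProbabilityMeasure P]
    {k : ℕ} (X : Ω → (Fin k → ℝ)) (Y1 Y0 D R : Ω → ℝ)
    (hX : Measurable X) (hY1 : Measurable Y1) (hY0 : Measurable Y0)
    (hD : Measurable D) (hR : Measurable R)
    (hDbin : ∀ ω, D ω = 0 ∨ D ω = 1) (hRbin : ∀ ω, R ω = 0 ∨ R ω = 1)
    -- nonconformity score V_C = v(X, D, Y(1), Y(0))
    (v : (Fin k → ℝ) × ℝ × ℝ × ℝ → ℝ) (hv : Measurable v)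
    (V : Ω → ℝ) (hV : V = fun ω => v (X ω, D ω, Y1 ω, Y0 ω))
    -- 0 < P(R = 0) < 1
    (hpos0 : 0 < P {ω | R ω = 0}) (hpos1 : P {ω | R ω = 0} < 1)
    -- eR is (a version of) the response propensity P(R = 1 | X, D),
    -- with 0 < P(R = 1 | X, D) < 1 almost surely
    (eR : (Fin k → ℝ) → ℝ → ℝ) (heRmeas : Measurable fun p : (Fin k → ℝ) × ℝ => eR p.1 p.2)
    (heR : (fun ω => eR (X ω) (D ω)) =ᵐ[P]
      MeasureTheory.condExp (MeasurableSpace.comap (fun ω' => (X ω', D ω')) inferInstance) P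
        (Set.indicator {ω' | R ω' = 1} (fun _ => (1 : ℝ))))
    (heRbdd : ∀ᵐ ω ∂P, 0 < eR (X ω) (D ω) ∧ eR (X ω) (D ω) < 1)
    -- mC is (a version of) the conditional CDF of V_C given (X, D) on the responders
    (mC : ℝ → (Fin k → ℝ) → ℝ → ℝ)
    (hmCmeas : Measurable fun p : ℝ × (Fin k → ℝ) × ℝ => mC p.1 p.2.1 p.2.2)
    (hmCbdd : ∀ η x d, mC η x d ∈ Set.Icc (0 : ℝ) 1)
    (hmC : ∀ η : ℝ, (fun ω => mC η (X ω) (D ω)) =ᵐ[P[|{ω' | R ω' = 1}]]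
      MeasureTheory.condExp (MeasurableSpace.comap (fun ω' => (X ω', D ω')) inferInstance)
        (P[|{ω' | R ω' = 1}])
        (Set.indicator {ω' | V ω' < η} (fun _ => (1 : ℝ))))
    -- w is the Radon–Nikodym derivative of Law(X, D | R = 0) w.r.t. Law(X, D | R = 1)
    (w : (Fin k → ℝ) → ℝ → ℝ) (hwmeas : Measurable fun p : (Fin k → ℝ) × ℝ => w p.1 p.2)
    (hwnonneg : ∀ x d, 0 ≤ w x d)
    (hw : Measure.map (fun ω => (X ω, D ω)) (P[|{ω | R ω = 0}]) =
      (Measure.map (fun ω => (X ω, D ω)) (P[|{ω | R ω = 1}])).withDensity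
        (fun p => ENNReal.ofReal (w p.1 p.2)))
    (η : ℝ) (γ : ℝ) (hγ : γ ∈ Set.Ioo (0 : ℝ) 1) :
    (∫ ω, (1 - eR (X ω) (D ω)) * (mC η (X ω) (D ω) - (1 - γ)) ∂P) =
      (P {ω | R ω = 0}).toReal *
        ((∫ ω, w (X ω) (D ω) * (if V ω < η then (1 : ℝ) else 0) ∂(P[|{ω' | R ω' = 1}]))
          - (1 - γ)) :=
  stmt_8_general (mΩ := mΩ) P X Y1 Y0 D R hX hY1 hY0 hD hR hRbin v hv V hV hpos0 eR heR mC hmCmeas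
    hmCbdd hmC w hwmeas hwnonneg hw η γ
end

section
/- Suppose 0 < P(R = 1 | X, D) < 1 almost surely, let π_R(X, D) := P(R = 1 | X, D) / P(R = 0 | X, D) and m_C(η, X, D) := P(V_C < η | X, D, R = 1) be the true nuisance functions, and let m̂ : ℝ × ℝ^k × {0,1} → [0,1] be measurable and π̂ : ℝ^k × {0,1} → ℝ be measurable and bounded below by a positive constant. Then for every η ∈ ℝ: E[ ψ_C(η; m̂, π̂) ] − E[ ψ_C(η; m_C, π_R) ] = E[ P(R = 1 | X, D) · ( 1/π̂(X, D) − 1/π_R(X, D) ) · ( m_C(η, X, D) − m̂(η, X, D) ) ]. -/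
open MeasureTheory ProbabilityTheory
open scoped ENNReal

/-! Write `e = P(R = 1 | X, D)`, `I = 1{V_C < η}` and `w = 1/π̂ - 1/π_R`. Since `e / π_R = 1 - e`,
the difference of the two influence functions is, pointwise,
`e w (m_C - m̂) + (m_C - m̂)(1 + 1/π̂)(R - e) + R w (I - m_C)`.
The second term has mean zero because `e = E[R | X, D]`, the third because
`m_C = E[I | X, D, R = 1]`: both are instances of the pull-out property of conditional
expectation. The only unbounded weight is `R / π_R`; it is integrable because
`E[R / e] = E[e / e] ≤ 1`, which is the pull-out property for the nonnegative function `R`,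
obtained by comparing the measures `R dP` and `e dP` on `σ(X, D)`. -/

section CondExp

variable {Ω : Type*} {G m₀ : MeasurableSpace Ω} {μ : Measure Ω} {f f' g : Ω → ℝ}

theorem lintegral_ofReal_mul_eq_of_ae_eq_condExp (hG : G ≤ m₀) [SigmaFinite (μ.trim hG)]
    (hf : Integrable f μ) (hf₀ : 0 ≤ᵐ[μ] f) (hf' : f' =ᵐ[μ] μ[f|G])
    {h : Ω → ℝ≥0∞} (hh : Measurable[G] h) :
    ∫⁻ ω, ENNReal.ofReal (f ω) * h ω ∂μ = ∫⁻ ω, ENNReal.ofReal (f' ω) * h ω ∂μ := by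
  have hf'int : Integrable f' μ := integrable_condExp.congr hf'.symm
  have hf'₀ : 0 ≤ᵐ[μ] f' := by
    filter_upwards [hf', condExp_nonneg (m := G) hf₀] with ω h₁ h₂ using h₁ ▸ h₂
  have htrim : (μ.withDensity fun ω ↦ ENNReal.ofReal (f ω)).trim hG =
      (μ.withDensity fun ω ↦ ENNReal.ofReal (f' ω)).trim hG := by
    refine @Measure.ext _ G _ _ fun A hA ↦ ?_
    rw [trim_measurableSet_eq hG hA, trim_measurableSet_eq hG hA,
      withDensity_apply _ (hG A hA), withDensity_apply _ (hG A hA),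
      ← ofReal_integral_eq_lintegral_ofReal hf.integrableOn (ae_restrict_of_ae hf₀),
      ← ofReal_integral_eq_lintegral_ofReal hf'int.integrableOn (ae_restrict_of_ae hf'₀),
      setIntegral_congr_ae (hG A hA) (hf'.mono fun ω h _ ↦ h), setIntegral_condExp hG hf hA]
  calc ∫⁻ ω, ENNReal.ofReal (f ω) * h ω ∂μ
      = ∫⁻ ω, h ω ∂(μ.withDensity fun ω ↦ ENNReal.ofReal (f ω)).trim hG := by
        rw [lintegral_trim hG hh, lintegral_withDensity_eq_lintegral_mul₀
          hf.aemeasurable.ennreal_ofReal (hh.mono hG le_rfl).aemeasurable]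
        rfl
    _ = ∫⁻ ω, ENNReal.ofReal (f' ω) * h ω ∂μ := by
        rw [htrim, lintegral_trim hG hh, lintegral_withDensity_eq_lintegral_mul₀
          hf'int.aemeasurable.ennreal_ofReal (hh.mono hG le_rfl).aemeasurable]
        rfl

theorem integrable_mul_of_ae_eq_condExp (hG : G ≤ m₀) [SigmaFinite (μ.trim hG)]
    (hf : Integrable f μ) (hf₀ : 0 ≤ᵐ[μ] f) (hf' : f' =ᵐ[μ] μ[f|G])
    (hg : Measurable[G] g) (hgf' : Integrable (g * f') μ) : Integrable (g * f) μ := by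
  have hf'₀ : 0 ≤ᵐ[μ] f' := by
    filter_upwards [hf', condExp_nonneg (m := G) hf₀] with ω h₁ h₂ using h₁ ▸ h₂
  have henorm : ∀ F : Ω → ℝ, 0 ≤ᵐ[μ] F →
      ∫⁻ ω, ‖(g * F) ω‖ₑ ∂μ = ∫⁻ ω, ENNReal.ofReal (F ω) * ‖g ω‖ₑ ∂μ := fun F hF ↦
    lintegral_congr_ae <| hF.mono fun ω hω ↦ by
      show ‖g ω * F ω‖ₑ = _
      rw [enorm_mul, Real.enorm_eq_ofReal hω, mul_comm]
  refine ⟨(hg.mono hG le_rfl).aestronglyMeasurable.mul hf.1, ?_⟩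
  rw [HasFiniteIntegral, henorm f hf₀, lintegral_ofReal_mul_eq_of_ae_eq_condExp hG hf hf₀ hf'
    (h := fun ω ↦ ‖g ω‖ₑ) (measurable_enorm.comp hg), ← henorm f' hf'₀]
  exact hgf'.2

theorem integrable_div_odds_of_ae_eq_condExp [IsFiniteMeasure μ] (hG : G ≤ m₀)
    (hf : Integrable f μ) (hf₀ : 0 ≤ᵐ[μ] f) (hf' : f' =ᵐ[μ] μ[f|G])
    (hf'G : Measurable[G] f') (hf'₀ : ∀ᵐ ω ∂μ, f' ω ≠ 0) :
    Integrable (fun ω ↦ f ω / (f' ω / (1 - f' ω))) μ := by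
  have hinv : Integrable ((fun ω ↦ (f' ω)⁻¹) * f') μ :=
    (integrable_const (1 : ℝ)).congr <| hf'₀.mono fun ω hω ↦ (inv_mul_cancel₀ hω).symm
  have hdiv : Integrable ((fun ω ↦ (f' ω)⁻¹) * f) μ :=
    integrable_mul_of_ae_eq_condExp hG hf hf₀ hf' hf'G.inv hinv
  refine (hdiv.sub hf).congr (hf'₀.mono fun ω hω ↦ ?_)
  simp only [Pi.sub_apply, Pi.mul_apply, div_div_eq_mul_div]
  field_simp

theorem mul_ae_eq_condExp_mul (hf : Integrable f μ) (hf' : f' =ᵐ[μ] μ[f|G])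
    (hg : Measurable[G] g) (hgf : Integrable (g * f) μ) : g * f' =ᵐ[μ] μ[g * f|G] := by
  filter_upwards [hf', condExp_mul_of_stronglyMeasurable_left hg.stronglyMeasurable hgf hf]
    with ω h₁ h₂
  rw [h₂, Pi.mul_apply, Pi.mul_apply, h₁]

theorem integrable_mul_sub_of_ae_eq_condExp (hf : Integrable f μ) (hf' : f' =ᵐ[μ] μ[f|G])
    (hg : Measurable[G] g) (hgf : Integrable (g * f) μ) :
    Integrable (fun ω ↦ g ω * (f ω - f' ω)) μ := by
  simp only [mul_sub]
  exact hgf.sub (integrable_condExp.congr (mul_ae_eq_condExp_mul hf hf' hg hgf).symm)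

theorem integral_mul_sub_eq_zero_of_ae_eq_condExp (hG : G ≤ m₀) [SigmaFinite (μ.trim hG)]
    (hf : Integrable f μ) (hf' : f' =ᵐ[μ] μ[f|G]) (hg : Measurable[G] g)
    (hgf : Integrable (g * f) μ) : ∫ ω, g ω * (f ω - f' ω) ∂μ = 0 := by
  have hpull := mul_ae_eq_condExp_mul hf hf' hg hgf
  have hgf' : Integrable (g * f') μ := integrable_condExp.congr hpull.symm
  calc ∫ ω, g ω * (f ω - f' ω) ∂μ = ∫ ω, g ω * f ω ∂μ - ∫ ω, g ω * f' ω ∂μ := by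
        simp only [mul_sub]; exact integral_sub hgf hgf'
    _ = 0 := by
        rw [sub_eq_zero]; exact ((integral_congr_ae hpull).trans (integral_condExp hG)).symm

end CondExp

section Cond

variable {Ω : Type*} [MeasurableSpace Ω] {P : Measure Ω} {s : Set Ω} {F : Ω → ℝ}

theorem setIntegral_eq_measureReal_mul_integral_cond [IsFiniteMeasure P] :
    ∫ ω in s, F ω ∂P = P.real s * ∫ ω, F ω ∂P[|s] := by
  rcases eq_or_ne (P s) 0 with hs | hs
  · simp [Measure.restrict_eq_zero.2 hs, measureReal_def, hs]
  rw [ProbabilityTheory.cond, integral_smul_measure, smul_eq_mul, ← mul_assoc, measureReal_def,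
    ENNReal.toReal_inv, mul_inv_cancel₀ (ENNReal.toReal_ne_zero.2 ⟨hs, measure_ne_top P s⟩),
    one_mul]

theorem MeasureTheory.IntegrableOn.integrable_cond (hF : IntegrableOn F s P) :
    Integrable F P[|s] := by
  rcases eq_or_ne (P s) 0 with hs | hs
  · simp [cond_eq_zero_of_meas_eq_zero hs]
  exact hF.smul_measure (ENNReal.inv_ne_top.2 hs)

end Cond

theorem integral_mul_mul_sub_eq_zero_of_ae_eq_condExp_cond {Ω : Type*}
    {G m₀ : MeasurableSpace Ω} {P : Measure Ω} [IsFiniteMeasure P] (hG : G ≤ m₀)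
    {R h I m : Ω → ℝ} (hR : Measurable R) (hRbin : ∀ ω, R ω = 0 ∨ R ω = 1)
    (hh : Measurable[G] h) (hRh : Integrable (fun ω ↦ R ω * h ω) P)
    (hI : MemLp I ∞ P[|{ω | R ω = 1}]) (hm : m =ᵐ[P[|{ω | R ω = 1}]] P[|{ω | R ω = 1}][I|G]) :
    ∫ ω, R ω * (h ω * (I ω - m ω)) ∂P = 0 := by
  set s := {ω | R ω = 1}
  have hs : MeasurableSet s := hR (measurableSet_singleton 1)
  have hRs : ∀ F : Ω → ℝ, (fun ω ↦ R ω * F ω) = s.indicator F := fun F ↦ funext fun ω ↦ by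
    rcases hRbin ω with h | h <;> simp [s, h]
  have hhs : IntegrableOn h s P := (integrable_indicator_iff hs).1 (hRs h ▸ hRh)
  rw [hRs fun ω ↦ h ω * (I ω - m ω), integral_indicator hs,
    setIntegral_eq_measureReal_mul_integral_cond, integral_mul_sub_eq_zero_of_ae_eq_condExp hG
      (hI.integrable le_top) hm hh (hhs.integrable_cond.mul_of_top_left hI), mul_zero]

section Bounded

variable {Ω : Type*} [MeasurableSpace Ω] {μ : Measure Ω} {f : Ω → ℝ}

theorem memLp_top_of_mem_Icc (hf : AEStronglyMeasurable f μ)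
    (h01 : ∀ ω, f ω ∈ Set.Icc (0 : ℝ) 1) : MemLp f ∞ μ :=
  memLp_top_of_bound hf 1 <| ae_of_all _ fun ω ↦ by
    rw [Real.norm_eq_abs, abs_le]; exact ⟨by linarith [(h01 ω).1], (h01 ω).2⟩

theorem memLp_top_one_div_of_le (hf : AEStronglyMeasurable f μ) {c : ℝ} (hc : 0 < c)
    (hcf : ∀ ω, c ≤ f ω) : MemLp (fun ω ↦ 1 / f ω) ∞ μ :=
  memLp_top_of_bound (hf.aemeasurable.const_div 1).aestronglyMeasurable (1 / c) <|
    ae_of_all _ fun ω ↦ by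
      rw [Real.norm_eq_abs, abs_of_pos (one_div_pos.2 (hc.trans_le (hcf ω)))]
      exact one_div_le_one_div_of_le hc (hcf ω)

end Bounded

/-- `ψ_C(η; m, π)`, with `I = 1{V_C < η}` and the nuisances already evaluated at `(η, X, D)`. -/
noncomputable def effInfluence {Ω : Type*} (γ : ℝ) (R I m π : Ω → ℝ) (ω : Ω) : ℝ :=
  (1 - R ω) * (m ω - (1 - γ)) + R ω / π ω * (I ω - m ω)

theorem effInfluence_sub_effInfluence {Ω : Type*} (γ : ℝ) (R I e m m' π : Ω → ℝ) {ω : Ω}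
    (he : e ω ≠ 0) :
    effInfluence γ R I m' π ω - effInfluence γ R I m (fun ω ↦ e ω / (1 - e ω)) ω =
      e ω * (1 / π ω - 1 / (e ω / (1 - e ω))) * (m ω - m' ω) +
        (m ω - m' ω) * (1 + 1 / π ω) * (R ω - e ω) +
        R ω * ((1 / π ω - 1 / (e ω / (1 - e ω))) * (I ω - m ω)) := by
  simp only [effInfluence, div_div_eq_mul_div]
  field_simp
  ring

theorem integrable_effInfluence {Ω : Type*} [MeasurableSpace Ω] {P : Measure Ω}
    [IsFiniteMeasure P] (γ : ℝ) {R I m π : Ω → ℝ} (hR : MemLp R ∞ P) (hI : MemLp I ∞ P)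
    (hm : MemLp m ∞ P) (hRπ : Integrable (fun ω ↦ R ω / π ω) P) :
    Integrable (effInfluence γ R I m π) P := by
  have hres : MemLp (fun ω ↦ (1 - R ω) * (m ω - (1 - γ))) ∞ P :=
    (hm.sub (memLp_const _)).mul' ((memLp_const 1).sub hR)
  exact (hres.integrable le_top).add (hRπ.mul_of_top_left (hI.sub hm))

theorem integral_effInfluence_sub_integral_effInfluence {Ω : Type*} {G m₀ : MeasurableSpace Ω}
    {P : Measure Ω} [IsFiniteMeasure P] (hG : G ≤ m₀) (γ : ℝ) {R I e m m' π : Ω → ℝ}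
    (hR : Measurable R) (hRbin : ∀ ω, R ω = 0 ∨ R ω = 1)
    (hI : Measurable I) (hI01 : ∀ ω, I ω ∈ Set.Icc (0 : ℝ) 1)
    (he : Measurable[G] e) (heR : e =ᵐ[P] P[R|G]) (he₀ : ∀ᵐ ω ∂P, e ω ≠ 0)
    (hm : Measurable[G] m) (hm01 : ∀ ω, m ω ∈ Set.Icc (0 : ℝ) 1)
    (hmI : m =ᵐ[P[|{ω | R ω = 1}]] P[|{ω | R ω = 1}][I|G])
    (hm' : Measurable[G] m') (hm'01 : ∀ ω, m' ω ∈ Set.Icc (0 : ℝ) 1)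
    (hπ : Measurable[G] π) {c : ℝ} (hc : 0 < c) (hcπ : ∀ ω, c ≤ π ω) :
    ∫ ω, effInfluence γ R I m' π ω ∂P -
        ∫ ω, effInfluence γ R I m (fun ω ↦ e ω / (1 - e ω)) ω ∂P =
      ∫ ω, e ω * (1 / π ω - 1 / (e ω / (1 - e ω))) * (m ω - m' ω) ∂P := by
  have hR01 : ∀ ω, R ω ∈ Set.Icc (0 : ℝ) 1 := fun ω ↦ by rcases hRbin ω with h | h <;> simp [h]
  have hRL := memLp_top_of_mem_Icc (μ := P) hR.aestronglyMeasurable hR01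
  have hIL := memLp_top_of_mem_Icc (μ := P) hI.aestronglyMeasurable hI01
  have hmL := memLp_top_of_mem_Icc (μ := P) (hm.mono hG le_rfl).aestronglyMeasurable hm01
  have hm'L := memLp_top_of_mem_Icc (μ := P) (hm'.mono hG le_rfl).aestronglyMeasurable hm'01
  have hπinvL := memLp_top_one_div_of_le (μ := P) (hπ.mono hG le_rfl).aestronglyMeasurable hc hcπ
  have hRint : Integrable R P := hRL.integrable le_top
  have hRπ : Integrable (fun ω ↦ R ω / π ω) P :=
    (hRint.mul_of_top_right hπinvL).congr (ae_of_all _ fun ω ↦ by simp only [Pi.mul_apply]; ring)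
  have hRodds := integrable_div_odds_of_ae_eq_condExp hG hRint
    (ae_of_all _ fun ω ↦ (hR01 ω).1) heR he he₀
  have hψ' := integrable_effInfluence γ hRL hIL hm'L hRπ
  have hψ := integrable_effInfluence γ hRL hIL hmL hRodds
  have hwL : MemLp (fun ω ↦ (m ω - m' ω) * (1 + 1 / π ω)) ∞ P :=
    ((memLp_const (1 : ℝ)).add hπinvL).mul' (r := ∞) (hmL.sub hm'L)
  have hRorth := integral_mul_sub_eq_zero_of_ae_eq_condExp hG hRint heR (by fun_prop)
    (hRint.mul_of_top_right hwL)
  have hRorthInt := integrable_mul_sub_of_ae_eq_condExp hRint heR (by fun_prop)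
    (hRint.mul_of_top_right hwL)
  have hRgap : Integrable (fun ω ↦ R ω * (1 / π ω - 1 / (e ω / (1 - e ω)))) P :=
    (hRπ.sub hRodds).congr (ae_of_all _ fun ω ↦ by simp only [Pi.sub_apply, mul_sub, mul_one_div])
  have hIorth := integral_mul_mul_sub_eq_zero_of_ae_eq_condExp_cond hG hR hRbin (by fun_prop)
    hRgap (memLp_top_of_mem_Icc hI.aestronglyMeasurable hI01) hmI
  have hIorthInt : Integrable (fun ω ↦ R ω * ((1 / π ω - 1 / (e ω / (1 - e ω))) * (I ω - m ω))) P :=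
    (hRgap.mul_of_top_left (hIL.sub hmL)).congr
      (ae_of_all _ fun ω ↦ by simp only [Pi.sub_apply, Pi.mul_apply]; ring)
  have hdecomp : (fun ω ↦ effInfluence γ R I m' π ω -
      effInfluence γ R I m (fun ω ↦ e ω / (1 - e ω)) ω) =ᵐ[P] fun ω ↦
      e ω * (1 / π ω - 1 / (e ω / (1 - e ω))) * (m ω - m' ω) +
        (m ω - m' ω) * (1 + 1 / π ω) * (R ω - e ω) +
        R ω * ((1 / π ω - 1 / (e ω / (1 - e ω))) * (I ω - m ω)) :=
    he₀.mono fun ω hω ↦ effInfluence_sub_effInfluence γ R I e m m' π hω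
  have hmain : Integrable (fun ω ↦ e ω * (1 / π ω - 1 / (e ω / (1 - e ω))) * (m ω - m' ω)) P :=
    (((hψ'.sub hψ).sub hRorthInt).sub hIorthInt).congr
      (hdecomp.mono fun ω h ↦ by simp only [Pi.sub_apply] at h ⊢; rw [h]; ring)
  rw [← integral_sub hψ' hψ, integral_congr_ae hdecomp, integral_add ?_ hIorthInt,
    integral_add hmain hRorthInt, hRorth, hIorth, add_zero, add_zero]
  exact hmain.add hRorthInt

theorem stmt_12_general
    {Ω : Type*} [mΩ : MeasurableSpace Ω]
    (P : Measure Ω) [IsProbabilityMeasure P]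
    {k : ℕ} (X : Ω → (Fin k → ℝ)) (Y1 Y0 D R : Ω → ℝ)
    (hX : Measurable X) (hY1 : Measurable Y1) (hY0 : Measurable Y0)
    (hD : Measurable D) (hR : Measurable R)
    (hRbin : ∀ ω, R ω = 0 ∨ R ω = 1)
    -- nonconformity score V_C = v(X, D, Y(1), Y(0))
    (v : (Fin k → ℝ) × ℝ × ℝ × ℝ → ℝ) (hv : Measurable v)
    (V : Ω → ℝ) (hV : V = fun ω => v (X ω, D ω, Y1 ω, Y0 ω))
    (γ : ℝ)
    -- eR is (a version of) the response propensity P(R = 1 | X, D),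
    -- with 0 < P(R = 1 | X, D) < 1 almost surely
    (eR : (Fin k → ℝ) → ℝ → ℝ) (heRmeas : Measurable fun p : (Fin k → ℝ) × ℝ => eR p.1 p.2)
    (heR : (fun ω => eR (X ω) (D ω)) =ᵐ[P]
      MeasureTheory.condExp (MeasurableSpace.comap (fun ω' => (X ω', D ω')) inferInstance) P
        (Set.indicator {ω' | R ω' = 1} (fun _ => (1 : ℝ))))
    (heRbdd : ∀ᵐ ω ∂P, 0 < eR (X ω) (D ω) ∧ eR (X ω) (D ω) < 1)
    -- mC is (a version of) the true conditional CDF of V_C given (X, D) on the responders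
    (mC : ℝ → (Fin k → ℝ) → ℝ → ℝ)
    (hmCmeas : Measurable fun p : ℝ × (Fin k → ℝ) × ℝ => mC p.1 p.2.1 p.2.2)
    (hmCbdd : ∀ η x d, mC η x d ∈ Set.Icc (0 : ℝ) 1)
    (hmC : ∀ η : ℝ, (fun ω => mC η (X ω) (D ω)) =ᵐ[P[|{ω' | R ω' = 1}]]
      MeasureTheory.condExp (MeasurableSpace.comap (fun ω' => (X ω', D ω')) inferInstance)
        (P[|{ω' | R ω' = 1}])
        (Set.indicator {ω' | V ω' < η} (fun _ => (1 : ℝ))))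
    -- m̂ is measurable with values in [0,1]
    (mhat : ℝ → (Fin k → ℝ) → ℝ → ℝ)
    (hmhatmeas : Measurable fun p : ℝ × (Fin k → ℝ) × ℝ => mhat p.1 p.2.1 p.2.2)
    (hmhatbdd : ∀ η x d, mhat η x d ∈ Set.Icc (0 : ℝ) 1)
    -- π̂ is measurable and bounded below by a positive constant
    (πhat : (Fin k → ℝ) → ℝ → ℝ)
    (hπhatmeas : Measurable fun p : (Fin k → ℝ) × ℝ => πhat p.1 p.2)
    (hπhatpos : ∃ c : ℝ, 0 < c ∧ ∀ x d, c ≤ πhat x d)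
    (η : ℝ) :
    (∫ ω, ((1 - R ω) * (mhat η (X ω) (D ω) - (1 - γ)) +
        (R ω / πhat (X ω) (D ω)) *
          ((if V ω < η then (1 : ℝ) else 0) - mhat η (X ω) (D ω))) ∂P) -
      (∫ ω, ((1 - R ω) * (mC η (X ω) (D ω) - (1 - γ)) +
        (R ω / (eR (X ω) (D ω) / (1 - eR (X ω) (D ω)))) *
          ((if V ω < η then (1 : ℝ) else 0) - mC η (X ω) (D ω))) ∂P) =
      ∫ ω, eR (X ω) (D ω) *
        (1 / πhat (X ω) (D ω) - 1 / (eR (X ω) (D ω) / (1 - eR (X ω) (D ω)))) *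
        (mC η (X ω) (D ω) - mhat η (X ω) (D ω)) ∂P := by
  obtain ⟨c, hc, hcπ⟩ := hπhatpos
  have hXD : Measurable[MeasurableSpace.comap (fun ω ↦ (X ω, D ω)) inferInstance]
      fun ω ↦ (X ω, D ω) := comap_measurable _
  have hRind : Set.indicator {ω | R ω = 1} (fun _ ↦ (1 : ℝ)) = R := funext fun ω ↦ by
    rcases hRbin ω with h | h <;> simp [h]
  have hIind : Set.indicator {ω | V ω < η} (fun _ ↦ (1 : ℝ)) = fun ω ↦ if V ω < η then 1 else 0 :=
    funext fun ω ↦ by simp [Set.indicator_apply]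
  have hVmeas : Measurable V := hV ▸ by fun_prop
  exact integral_effInfluence_sub_integral_effInfluence (hX.prodMk hD).comap_le γ hR hRbin
    (Measurable.ite (measurableSet_lt hVmeas measurable_const) measurable_const measurable_const)
    (fun ω ↦ by split_ifs <;> simp) (heRmeas.comp hXD) (hRind ▸ heR)
    (heRbdd.mono fun ω h ↦ h.1.ne') ((hmCmeas.comp measurable_prodMk_left).comp hXD)
    (fun ω ↦ hmCbdd _ _ _) (hIind ▸ hmC η) ((hmhatmeas.comp measurable_prodMk_left).comp hXD)
    (fun ω ↦ hmhatbdd _ _ _) (hπhatmeas.comp hXD) hc (fun ω ↦ hcπ _ _)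

/-- second-order remainder / double robustness identity:
with the true nuisances `π_R(X,D) = P(R=1|X,D)/P(R=0|X,D)` and
`m_C(η,X,D) = P(V_C<η|X,D,R=1)`, and arbitrary estimates `m̂ ∈ [0,1]` and `π̂ ≥ c > 0`:
`E[ψ_C(η; m̂, π̂)] − E[ψ_C(η; m_C, π_R)]
  = E[ P(R=1|X,D)·(1/π̂(X,D) − 1/π_R(X,D))·(m_C(η,X,D) − m̂(η,X,D)) ]`. -/
theorem stmt_12
    {Ω : Type*} [mΩ : MeasurableSpace Ω] [StandardBorelSpace Ω]
    (P : Measure Ω) [IsProbabilityMeasure P]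
    {k : ℕ} (X : Ω → (Fin k → ℝ)) (Y1 Y0 D R : Ω → ℝ)
    (hX : Measurable X) (hY1 : Measurable Y1) (hY0 : Measurable Y0)
    (hD : Measurable D) (hR : Measurable R)
    (hDbin : ∀ ω, D ω = 0 ∨ D ω = 1) (hRbin : ∀ ω, R ω = 0 ∨ R ω = 1)
    -- nonconformity score V_C = v(X, D, Y(1), Y(0))
    (v : (Fin k → ℝ) × ℝ × ℝ × ℝ → ℝ) (hv : Measurable v)
    (V : Ω → ℝ) (hV : V = fun ω => v (X ω, D ω, Y1 ω, Y0 ω))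
    (γ : ℝ) (hγ : γ ∈ Set.Ioo (0 : ℝ) 1)
    (hpos : 0 < P {ω | R ω = 1})
    -- eR is (a version of) the response propensity P(R = 1 | X, D),
    -- with 0 < P(R = 1 | X, D) < 1 almost surely
    (eR : (Fin k → ℝ) → ℝ → ℝ) (heRmeas : Measurable fun p : (Fin k → ℝ) × ℝ => eR p.1 p.2)
    (heR : (fun ω => eR (X ω) (D ω)) =ᵐ[P]
      MeasureTheory.condExp (MeasurableSpace.comap (fun ω' => (X ω', D ω')) inferInstance) P
        (Set.indicator {ω' | R ω' = 1} (fun _ => (1 : ℝ))))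
    (heRbdd : ∀ᵐ ω ∂P, 0 < eR (X ω) (D ω) ∧ eR (X ω) (D ω) < 1)
    -- mC is (a version of) the true conditional CDF of V_C given (X, D) on the responders
    (mC : ℝ → (Fin k → ℝ) → ℝ → ℝ)
    (hmCmeas : Measurable fun p : ℝ × (Fin k → ℝ) × ℝ => mC p.1 p.2.1 p.2.2)
    (hmCbdd : ∀ η x d, mC η x d ∈ Set.Icc (0 : ℝ) 1)
    (hmC : ∀ η : ℝ, (fun ω => mC η (X ω) (D ω)) =ᵐ[P[|{ω' | R ω' = 1}]]
      MeasureTheory.condExp (MeasurableSpace.comap (fun ω' => (X ω', D ω')) inferInstance)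
        (P[|{ω' | R ω' = 1}])
        (Set.indicator {ω' | V ω' < η} (fun _ => (1 : ℝ))))
    -- m̂ is measurable with values in [0,1]
    (mhat : ℝ → (Fin k → ℝ) → ℝ → ℝ)
    (hmhatmeas : Measurable fun p : ℝ × (Fin k → ℝ) × ℝ => mhat p.1 p.2.1 p.2.2)
    (hmhatbdd : ∀ η x d, mhat η x d ∈ Set.Icc (0 : ℝ) 1)
    -- π̂ is measurable and bounded below by a positive constant
    (πhat : (Fin k → ℝ) → ℝ → ℝ)
    (hπhatmeas : Measurable fun p : (Fin k → ℝ) × ℝ => πhat p.1 p.2)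
    (hπhatpos : ∃ c : ℝ, 0 < c ∧ ∀ x d, c ≤ πhat x d)
    (η : ℝ) :
    (∫ ω, ((1 - R ω) * (mhat η (X ω) (D ω) - (1 - γ)) +
        (R ω / πhat (X ω) (D ω)) *
          ((if V ω < η then (1 : ℝ) else 0) - mhat η (X ω) (D ω))) ∂P) -
      (∫ ω, ((1 - R ω) * (mC η (X ω) (D ω) - (1 - γ)) +
        (R ω / (eR (X ω) (D ω) / (1 - eR (X ω) (D ω)))) *
          ((if V ω < η then (1 : ℝ) else 0) - mC η (X ω) (D ω))) ∂P) =
      ∫ ω, eR (X ω) (D ω) *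
        (1 / πhat (X ω) (D ω) - 1 / (eR (X ω) (D ω) / (1 - eR (X ω) (D ω)))) *
        (mC η (X ω) (D ω) - mhat η (X ω) (D ω)) ∂P :=
  stmt_12_general (mΩ := mΩ) P X Y1 Y0 D R hX hY1 hY0 hD hR hRbin v hv V hV γ eR heRmeas heR heRbdd
    mC hmCmeas hmCbdd hmC mhat hmhatmeas hmhatbdd πhat hπhatmeas hπhatpos η
end
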